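/- arXiv:2412.14506 — 6 statements merged into one kernel-verified Lean document; each statement's English description precedes it below -/
import Mathlib

section
/- Let f₁ : ℝ → ℝ be a C¹ function that is κ-quasar-convex with respect to the point 0 with min_{x∈ℝ} f₁(x) = f₁(0) = 0, and let f₂ be a nonnegative C¹ function defined on the unit sphere S^{p−1} of ℝ^p. Define f : ℝ^p → ℝ by f(x) = f₁(‖x‖) f₂(x/‖x‖) for x ≠ 0 and f(0) = 0. Then f is nonnegative, C¹, and κ-quasar-convex on ℝ^p with respect to x* = 0; moreover for x ≠ 0 its gradient is ∇f(x) = (x/‖x‖) f₁′(‖x‖) f₂(x/‖x‖) + (1/‖x‖)(Id − xxᵀ/‖x‖²) f₁(‖x‖) ∇f₂(x/‖x‖), where ∇f₂ denotes the (Riemannian/tangential) gradient of f₂ on the sphere. -/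
/-!
Write x = t • u with t = ‖x‖ and ‖u‖ = 1, so that f(x) = f₁(t) f₂(u). Away from the origin the
gradient comes from the chain rule, the derivative of x ↦ x/‖x‖ being (Id − u uᵀ)/‖x‖; the
tangential part of ∇f(x) is orthogonal to x, so ⟪∇f(x), -x⟫ = -t f₁′(t) f₂(u) and the
quasar-convexity inequality for f is the one for f₁ multiplied by f₂(u) ≥ 0.
At the origin, 0 minimises f₁, so f₁(0) = f₁′(0) = 0: hence f₁(t) = o(t) and f₁′(t) → 0, while f₂
and its gradient are bounded on the unit ball. Thus ∇f(0) = 0 and ∇f is continuous at 0.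
-/

open RealInnerProductSpace Topology Filter Asymptotics

theorem isLittleO_comp_norm_of_hasDerivAt_zero {E : Type*} [SeminormedAddCommGroup E]
    {f : ℝ → ℝ} (hf : HasDerivAt f 0 0) (hf0 : f 0 = 0) :
    (fun x : E => f ‖x‖) =o[𝓝 0] fun x => ‖x‖ := by
  have h := hasDerivAt_iff_isLittleO_nhds_zero.1 hf
  simp only [zero_add, hf0, sub_zero, smul_zero] at h
  exact h.comp_tendsto tendsto_norm_zero

section NormedSpace

variable {E : Type*} [NormedAddCommGroup E] [NormedSpace ℝ E]

theorem norm_inv_norm_smul_of_ne_zero {x : E} (hx : x ≠ 0) : ‖‖x‖⁻¹ • x‖ = 1 := by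
  rw [norm_smul, norm_inv, norm_norm, inv_mul_cancel₀ (norm_ne_zero_iff.2 hx)]

theorem norm_inv_norm_smul_le_one (x : E) : ‖‖x‖⁻¹ • x‖ ≤ 1 := by
  rcases eq_or_ne x 0 with rfl | hx
  · simp
  · exact (norm_inv_norm_smul_of_ne_zero hx).le

theorem isBoundedUnder_norm_comp_inv_norm_smul [ProperSpace E] {G : Type*}
    [SeminormedAddCommGroup G] {g : E → G} (hg : Continuous g) (l : Filter E) :
    IsBoundedUnder (· ≤ ·) l fun x => ‖g (‖x‖⁻¹ • x)‖ := by
  obtain ⟨C, hC⟩ := (isCompact_closedBall (0 : E) 1).exists_bound_of_continuousOn hg.continuousOn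
  exact isBoundedUnder_of
    ⟨C, fun x => hC _ (mem_closedBall_zero_iff.2 (norm_inv_norm_smul_le_one x))⟩

noncomputable def sphericalProduct (f₁ : ℝ → ℝ) (f₂ : E → ℝ) (x : E) : ℝ :=
  f₁ ‖x‖ * f₂ (‖x‖⁻¹ • x)

theorem sphericalProduct_nonneg {f₁ : ℝ → ℝ} {f₂ : E → ℝ} (hf₁ : ∀ t, 0 ≤ f₁ t) (hf₁0 : f₁ 0 = 0)
    (hf₂ : ∀ u : E, ‖u‖ = 1 → 0 ≤ f₂ u) (x : E) : 0 ≤ sphericalProduct f₁ f₂ x := by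
  rcases eq_or_ne x 0 with rfl | hx
  · simp [sphericalProduct, hf₁0]
  · exact mul_nonneg (hf₁ _) (hf₂ _ (norm_inv_norm_smul_of_ne_zero hx))

end NormedSpace

section InnerProductSpace

variable {F : Type*} [NormedAddCommGroup F] [InnerProductSpace ℝ F]

theorem hasFDerivAt_norm_of_ne_zero {x : F} (hx : x ≠ 0) :
    HasFDerivAt (‖·‖) (innerSL ℝ (‖x‖⁻¹ • x)) x := by
  have hsqrt := (hasStrictFDerivAt_norm_sq x).hasFDerivAt.sqrt (by positivity)
  simp only [Real.sqrt_sq (norm_nonneg _)] at hsqrt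
  refine hsqrt.congr_fderiv ?_
  ext v
  simp
  field_simp

theorem hasFDerivAt_inv_norm_smul {x : F} (hx : x ≠ 0) :
    HasFDerivAt (fun y : F => ‖y‖⁻¹ • y)
      (‖x‖⁻¹ • (ContinuousLinearMap.id ℝ F -
        (innerSL ℝ (‖x‖⁻¹ • x)).smulRight (‖x‖⁻¹ • x))) x := by
  have hinv := (hasDerivAt_inv (norm_ne_zero_iff.2 hx)).comp_hasFDerivAt x
    (hasFDerivAt_norm_of_ne_zero hx)
  refine (hinv.smul (hasFDerivAt_id x)).congr_fderiv ?_
  ext v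
  simp [smul_smul, smul_sub]
  module

variable [CompleteSpace F]

theorem contDiff_one_of_hasGradientAt {f : F → ℝ} {f' : F → F}
    (hf : ∀ x, HasGradientAt f (f' x) x) (hf' : Continuous f') : ContDiff ℝ 1 f :=
  contDiff_one_iff_hasFDerivAt.2 ⟨fun x => InnerProductSpace.toDual ℝ F (f' x),
    (InnerProductSpace.toDual ℝ F).continuous.comp hf', fun x => (hf x).hasFDerivAt⟩

theorem ContDiff.continuous_gradient {f : F → ℝ} (hf : ContDiff ℝ 1 f) :
    Continuous (gradient f) :=
  (InnerProductSpace.toDual ℝ F).symm.continuous.comp (hf.continuous_fderiv one_ne_zero)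

noncomputable def tangentialGradient (g : F → ℝ) (u : F) : F :=
  gradient g u - ⟪u, gradient g u⟫ • u

theorem inner_tangentialGradient_self (g : F → ℝ) {u : F} (hu : ‖u‖ = 1) :
    ⟪tangentialGradient g u, u⟫ = 0 := by
  rw [tangentialGradient, inner_sub_left, real_inner_smul_left, real_inner_self_eq_norm_sq, hu,
    real_inner_comm]
  ring

theorem ContDiff.continuous_tangentialGradient {g : F → ℝ} (hg : ContDiff ℝ 1 g) :
    Continuous (tangentialGradient g) := by
  have := hg.continuous_gradient
  unfold tangentialGradient
  fun_prop

/-- At `x = 0` this is `0`, because `‖0‖⁻¹ • 0 = 0` and `f₁ 0 / 0 = 0`. -/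
noncomputable def sphericalProductGradient (f₁ : ℝ → ℝ) (f₂ : F → ℝ) (x : F) : F :=
  (deriv f₁ ‖x‖ * f₂ (‖x‖⁻¹ • x)) • (‖x‖⁻¹ • x) +
    (f₁ ‖x‖ / ‖x‖) • tangentialGradient f₂ (‖x‖⁻¹ • x)

variable {f₁ : ℝ → ℝ} {f₂ : F → ℝ}

theorem hasGradientAt_sphericalProduct {x : F} (hx : x ≠ 0) (hf₁ : DifferentiableAt ℝ f₁ ‖x‖)
    (hf₂ : DifferentiableAt ℝ f₂ (‖x‖⁻¹ • x)) :
    HasGradientAt (sphericalProduct f₁ f₂) (sphericalProductGradient f₁ f₂ x) x := by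
  have hradial := hf₁.hasDerivAt.comp_hasFDerivAt x (hasFDerivAt_norm_of_ne_zero hx)
  have hangular : HasFDerivAt (fun y => f₂ (‖y‖⁻¹ • y)) _ x :=
    hf₂.hasGradientAt.hasFDerivAt.comp (f := fun y : F => ‖y‖⁻¹ • y) x
      (hasFDerivAt_inv_norm_smul hx)
  rw [hasGradientAt_iff_hasFDerivAt]
  refine (hradial.mul hangular).congr_fderiv ?_
  ext v
  simp [sphericalProductGradient, tangentialGradient]
  field_simp
  ring

theorem inner_sphericalProductGradient_self (x : F) :
    ⟪sphericalProductGradient f₁ f₂ x, x⟫ = deriv f₁ ‖x‖ * f₂ (‖x‖⁻¹ • x) * ‖x‖ := by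
  rcases eq_or_ne x 0 with rfl | hx
  · simp
  have hu := norm_inv_norm_smul_of_ne_zero hx
  calc ⟪sphericalProductGradient f₁ f₂ x, x⟫
      = ‖x‖ * ⟪sphericalProductGradient f₁ f₂ x, ‖x‖⁻¹ • x⟫ := by
        rw [real_inner_smul_right, ← mul_assoc, mul_inv_cancel₀ (norm_ne_zero_iff.2 hx), one_mul]
    _ = _ := by
      rw [sphericalProductGradient, inner_add_left, real_inner_smul_left,
        real_inner_self_eq_norm_sq, hu, real_inner_smul_left, inner_tangentialGradient_self f₂ hu]
      ring

theorem sphericalProduct_add_inner_le {κ : ℝ}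
    (hf₁qc : ∀ t : ℝ, f₁ t + (1/κ) * (deriv f₁ t * (0 - t)) ≤ f₁ 0) (hf₁0 : f₁ 0 = 0)
    (hf₂pos : ∀ u : F, ‖u‖ = 1 → 0 ≤ f₂ u) (x : F) :
    sphericalProduct f₁ f₂ x + (1/κ) * ⟪sphericalProductGradient f₁ f₂ x, 0 - x⟫ ≤
      sphericalProduct f₁ f₂ 0 := by
  rcases eq_or_ne x 0 with rfl | hx
  · simp
  have h := mul_le_mul_of_nonneg_left (hf₁qc ‖x‖) (hf₂pos _ (norm_inv_norm_smul_of_ne_zero hx))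
  rw [zero_sub, inner_neg_right, inner_sphericalProductGradient_self]
  simp only [sphericalProduct, norm_zero, hf₁0, zero_mul] at h ⊢
  linear_combination h

end InnerProductSpace

section ProperSpace

variable {F : Type*} [NormedAddCommGroup F] [InnerProductSpace ℝ F] [ProperSpace F]
variable {f₁ : ℝ → ℝ} {f₂ : F → ℝ}

theorem hasGradientAt_sphericalProduct_zero (hf₁ : HasDerivAt f₁ 0 0) (hf₁0 : f₁ 0 = 0)
    (hf₂ : Continuous f₂) : HasGradientAt (sphericalProduct f₁ f₂) 0 0 := by
  rw [hasGradientAt_iff_isLittleO_nhds_zero, ← isLittleO_norm_right]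
  have h := (isLittleO_comp_norm_of_hasDerivAt_zero hf₁ hf₁0).mul_isBigO
    ((isBigO_one_iff ℝ).2 (isBoundedUnder_norm_comp_inv_norm_smul hf₂ (𝓝 (0 : F))))
  simpa [sphericalProduct, hf₁0] using h

theorem tendsto_sphericalProductGradient_zero (hf₁ : ContDiff ℝ 1 f₁) (hf₁0 : f₁ 0 = 0)
    (hf₁' : deriv f₁ 0 = 0) (hf₂ : ContDiff ℝ 1 f₂) :
    Tendsto (sphericalProductGradient f₁ f₂) (𝓝 0) (𝓝 0) := by
  have hradial : Tendsto (fun x : F => deriv f₁ ‖x‖) (𝓝 0) (𝓝 0) :=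
    hf₁' ▸ ((hf₁.continuous_deriv le_rfl).tendsto 0).comp tendsto_norm_zero
  have hslope : Tendsto (fun x : F => f₁ ‖x‖ / ‖x‖) (𝓝 0) (𝓝 0) :=
    (isLittleO_comp_norm_of_hasDerivAt_zero
      ((hf₁.differentiable one_ne_zero 0).hasDerivAt.congr_deriv hf₁') hf₁0).tendsto_div_nhds_zero
  have h := (hradial.zero_smul_isBoundedUnder_le (isBoundedUnder_norm_comp_inv_norm_smul
      (g := fun u => f₂ u • u) (by fun_prop) _)).add
    (hslope.zero_smul_isBoundedUnder_le (isBoundedUnder_norm_comp_inv_norm_smul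
      hf₂.continuous_tangentialGradient _))
  refine (add_zero (0 : F) ▸ h).congr fun x => ?_
  simp only [sphericalProductGradient, mul_smul]

theorem continuous_sphericalProductGradient (hf₁ : ContDiff ℝ 1 f₁) (hf₁0 : f₁ 0 = 0)
    (hf₁' : deriv f₁ 0 = 0) (hf₂ : ContDiff ℝ 1 f₂) :
    Continuous (sphericalProductGradient f₁ f₂) := by
  refine continuous_iff_continuousAt.2 fun x => ?_
  rcases eq_or_ne x 0 with rfl | hx
  · have h0 : sphericalProductGradient f₁ f₂ 0 = 0 := by simp [sphericalProductGradient]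
    rw [ContinuousAt, h0]
    exact tendsto_sphericalProductGradient_zero hf₁ hf₁0 hf₁' hf₂
  have hx' : ‖x‖ ≠ 0 := norm_ne_zero_iff.2 hx
  have := hf₁.continuous
  have := hf₁.continuous_deriv le_rfl
  have := hf₂.continuous
  have := hf₂.continuous_tangentialGradient
  unfold sphericalProductGradient
  fun_prop (disch := exact hx')

theorem hasGradientAt_sphericalProduct_of_contDiff (hf₁ : ContDiff ℝ 1 f₁) (hf₁0 : f₁ 0 = 0)
    (hf₁' : deriv f₁ 0 = 0) (hf₂ : ContDiff ℝ 1 f₂) (x : F) :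
    HasGradientAt (sphericalProduct f₁ f₂) (sphericalProductGradient f₁ f₂ x) x := by
  rcases eq_or_ne x 0 with rfl | hx
  · simpa [sphericalProductGradient] using hasGradientAt_sphericalProduct_zero
      ((hf₁.differentiable one_ne_zero 0).hasDerivAt.congr_deriv hf₁') hf₁0 hf₂.continuous
  · exact hasGradientAt_sphericalProduct hx (hf₁.differentiable one_ne_zero _)
      (hf₂.differentiable one_ne_zero _)

end ProperSpace

theorem quasar_convex_spherical_product_general
    (p : ℕ)
    (κ : ℝ)
    (f₁ : ℝ → ℝ) (hf₁ : ContDiff ℝ 1 f₁)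
    (hf₁min : ∀ t : ℝ, f₁ 0 ≤ f₁ t) (hf₁0 : f₁ 0 = 0)
    (hf₁qc : ∀ t : ℝ, f₁ t + (1/κ) * (deriv f₁ t * (0 - t)) ≤ f₁ 0)
    (f₂ : EuclideanSpace ℝ (Fin p) → ℝ) (hf₂ : ContDiff ℝ 1 f₂)
    (hf₂pos : ∀ u : EuclideanSpace ℝ (Fin p), ‖u‖ = 1 → 0 ≤ f₂ u)
    (f : EuclideanSpace ℝ (Fin p) → ℝ)
    (hf0 : f 0 = 0)
    (hfdef : ∀ x : EuclideanSpace ℝ (Fin p), x ≠ 0 →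
      f x = f₁ ‖x‖ * f₂ (‖x‖⁻¹ • x)) :
    (∀ x, 0 ≤ f x) ∧
    ContDiff ℝ 1 f ∧
    (∀ x : EuclideanSpace ℝ (Fin p),
      f x + (1/κ) * ⟪gradient f x, (0 : EuclideanSpace ℝ (Fin p)) - x⟫ ≤ f 0) ∧
    (∀ x : EuclideanSpace ℝ (Fin p), x ≠ 0 →
      gradient f x =
        (deriv f₁ ‖x‖ * f₂ (‖x‖⁻¹ • x)) • (‖x‖⁻¹ • x)
        + (f₁ ‖x‖ / ‖x‖) •
            (gradient f₂ (‖x‖⁻¹ • x)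
              - ⟪‖x‖⁻¹ • x, gradient f₂ (‖x‖⁻¹ • x)⟫ • (‖x‖⁻¹ • x))) := by
  obtain rfl : f = sphericalProduct f₁ f₂ := funext fun x => by
    rcases eq_or_ne x 0 with rfl | hx
    · simp [sphericalProduct, hf0, hf₁0]
    · exact hfdef x hx
  have hf₁' : deriv f₁ 0 = 0 := IsLocalMin.deriv_eq_zero (Eventually.of_forall hf₁min)
  have hgrad := hasGradientAt_sphericalProduct_of_contDiff hf₁ hf₁0 hf₁' hf₂
  refine ⟨sphericalProduct_nonneg (fun t => hf₁0 ▸ hf₁min t) hf₁0 hf₂pos,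
    contDiff_one_of_hasGradientAt hgrad (continuous_sphericalProductGradient hf₁ hf₁0 hf₁' hf₂),
    fun x => ?_, fun x _ => (hgrad x).gradient⟩
  rw [(hgrad x).gradient]
  exact sphericalProduct_add_inner_le hf₁qc hf₁0 hf₂pos x

/-- Proposition: if f₁ : ℝ → ℝ is C¹, κ-quasar-convex with respect to 0 with
min f₁ = f₁(0) = 0, and f₂ is a nonnegative C¹ function on the unit sphere of ℝ^p
(here represented by a C¹ ambient function, nonnegative on the sphere; its
tangential/Riemannian gradient at u is the projection ∇f₂(u) − ⟨u,∇f₂(u)⟩u), then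
f(x) = f₁(‖x‖)f₂(x/‖x‖) (with f(0)=0) is nonnegative, C¹, κ-quasar-convex with
respect to x* = 0, and its gradient for x ≠ 0 is
∇f(x) = (x/‖x‖)f₁′(‖x‖)f₂(x/‖x‖) + (1/‖x‖)(Id − xxᵀ/‖x‖²)f₁(‖x‖)∇f₂(x/‖x‖). -/
theorem quasar_convex_spherical_product
    (p : ℕ) (hp : 1 ≤ p)
    (κ : ℝ) (hκ0 : 0 < κ) (hκ1 : κ ≤ 1)
    (f₁ : ℝ → ℝ) (hf₁ : ContDiff ℝ 1 f₁)
    (hf₁min : ∀ t : ℝ, f₁ 0 ≤ f₁ t) (hf₁0 : f₁ 0 = 0)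
    (hf₁qc : ∀ t : ℝ, f₁ t + (1/κ) * (deriv f₁ t * (0 - t)) ≤ f₁ 0)
    (f₂ : EuclideanSpace ℝ (Fin p) → ℝ) (hf₂ : ContDiff ℝ 1 f₂)
    (hf₂pos : ∀ u : EuclideanSpace ℝ (Fin p), ‖u‖ = 1 → 0 ≤ f₂ u)
    (f : EuclideanSpace ℝ (Fin p) → ℝ)
    (hf0 : f 0 = 0)
    (hfdef : ∀ x : EuclideanSpace ℝ (Fin p), x ≠ 0 →
      f x = f₁ ‖x‖ * f₂ (‖x‖⁻¹ • x)) :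
    (∀ x, 0 ≤ f x) ∧
    ContDiff ℝ 1 f ∧
    (∀ x : EuclideanSpace ℝ (Fin p),
      f x + (1/κ) * ⟪gradient f x, (0 : EuclideanSpace ℝ (Fin p)) - x⟫ ≤ f 0) ∧
    (∀ x : EuclideanSpace ℝ (Fin p), x ≠ 0 →
      gradient f x =
        (deriv f₁ ‖x‖ * f₂ (‖x‖⁻¹ • x)) • (‖x‖⁻¹ • x)
        + (f₁ ‖x‖ / ‖x‖) •
            (gradient f₂ (‖x‖⁻¹ • x)
              - ⟪‖x‖⁻¹ • x, gradient f₂ (‖x‖⁻¹ • x)⟫ • (‖x‖⁻¹ • x))) :=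
  quasar_convex_spherical_product_general p κ f₁ hf₁ hf₁min hf₁0 hf₁qc f₂ hf₂ hf₂pos f hf0 hfdef
end

section
/- Let A, B ∈ ℝ^{p×p} be symmetric, a, b ∈ ℝ^p, α, β ∈ ℝ, and define g(x) = (1/2)⟨Ax, x⟩ + ⟨a, x⟩ + α, q(x) = (1/2)⟨Bx, x⟩ + ⟨b, x⟩ + β and f = g/q. Take 0 < m < M and K := {x ∈ ℝ^p : m ≤ q(x) ≤ M}, and let x* be the unique minimizer of f over K. Suppose A is positive definite and at least one of the following holds: (a) B = 0; (b) g is nonnegative on K and B is negative semidefinite; (c) g is nonpositive on K and B is positive semidefinite. Then: (1) f is κ-quasar-convex on K with respect to x*, with κ = m/M; (2) f is (κ/2, γ)-strongly quasar-convex on K with respect to x*, where γ = σ_min(A)/m and σ_min(A) is the minimum eigenvalue of A; (3) for every λ ∈ (0,1), f is (λκ, (λ^{−1} − 1)σ_min(A)/(4M))-strongly quasar-convex on K with respect to x*. -/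
/-!
Write `f = g / q` and `d = x⋆ - x`. Second-order Taylor expansions of quadratics are exact, so
`q(x⋆) (f(x⋆) - f(x)) = q(x) ⟪∇f(x), d⟫ + ½⟪A d, d⟫ - f(x) · ½⟪B d, d⟫`.
In each of the three cases the last term is nonnegative, and `⟪A d, d⟫ ≥ σ_min ‖d‖²`. As
`f(x⋆) ≤ f(x)` and `m ≤ q ≤ M` on `K`, this gives
`M ⟪∇f(x), d⟫ + (σ_min / 2) ‖d‖² ≤ m (f(x⋆) - f(x))`, i.e. `(m/M, σ_min/m)`-strong
quasar-convexity. All three claims follow, since at a minimizer a `(κ, μ)`-strongly quasar-convex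
function is also `(κ', μ')`-strongly quasar-convex whenever `0 < κ' ≤ κ` and `μ' ≤ (κ / κ') μ`.
-/

open RealInnerProductSpace

section Quotient

variable {E : Type*} [NormedAddCommGroup E] [NormedSpace ℝ E] {g q : E → ℝ} {x : E}

theorem fderiv_div_apply (hg : DifferentiableAt ℝ g x) (hq : DifferentiableAt ℝ q x)
    (hx : q x ≠ 0) (d : E) :
    fderiv ℝ (fun y => g y / q y) x d
      = (fderiv ℝ g x d * q x - g x * fderiv ℝ q x d) / q x ^ 2 := by
  have hinv : HasFDerivAt (fun y => (q y)⁻¹) ((-(q x ^ 2)⁻¹) • fderiv ℝ q x) x :=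
    (hasDerivAt_inv hx).comp_hasFDerivAt x hq.hasFDerivAt
  have hdiv : (fun y => g y / q y) = fun y => g y * (q y)⁻¹ := funext fun y => div_eq_mul_inv _ _
  rw [hdiv, (hg.hasFDerivAt.fun_mul hinv).fderiv]
  simp only [neg_smul, smul_neg, add_apply, neg_apply, smul_apply, smul_eq_mul]
  field_simp
  ring

theorem mul_div_sub_div_eq (hg : DifferentiableAt ℝ g x) (hq : DifferentiableAt ℝ q x)
    {y : E} (hx : q x ≠ 0) (hy : q y ≠ 0) :
    q y * (g y / q y - g x / q x)
      = q x * fderiv ℝ (fun z => g z / q z) x (y - x) + (g y - g x - fderiv ℝ g x (y - x))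
        - g x / q x * (q y - q x - fderiv ℝ q x (y - x)) := by
  rw [fderiv_div_apply hg hq hx]
  field_simp
  ring

end Quotient

section Quadratic

variable {E : Type*} [NormedAddCommGroup E] [InnerProductSpace ℝ E]

noncomputable def quadraticFun (A : E →L[ℝ] E) (a : E) (α : ℝ) (x : E) : ℝ :=
  1 / 2 * ⟪A x, x⟫ + ⟪a, x⟫ + α

variable (A : E →L[ℝ] E) (a : E) (α : ℝ) (x : E)

theorem hasFDerivAt_quadraticFun :
    HasFDerivAt (quadraticFun A a α)
      ((1 / 2 : ℝ) • ((fderivInnerCLM ℝ (A x, x)).comp (A.prod (.id ℝ E))) + innerSL ℝ a) x :=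
  (((A.hasFDerivAt.inner ℝ (hasFDerivAt_id x)).const_mul (1 / 2)).add
    (innerSL ℝ a).hasFDerivAt).add_const α

theorem fderiv_quadraticFun_apply (d : E) :
    fderiv ℝ (quadraticFun A a α) x d = 1 / 2 * (⟪A x, d⟫ + ⟪A d, x⟫) + ⟪a, d⟫ := by
  simp [(hasFDerivAt_quadraticFun A a α x).fderiv, fderivInnerCLM_apply]

theorem quadraticFun_sub_sub_fderiv (y : E) :
    quadraticFun A a α y - quadraticFun A a α x - fderiv ℝ (quadraticFun A a α) x (y - x)
      = 1 / 2 * ⟪A (y - x), y - x⟫ := by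
  simp only [fderiv_quadraticFun_apply, quadraticFun, map_sub, inner_sub_left, inner_sub_right]
  ring

end Quadratic

section QuasarConvex

variable {E : Type*} [NormedAddCommGroup E] [InnerProductSpace ℝ E] [CompleteSpace E]
  {K : Set E} {x₀ : E} {κ μ : ℝ} {f : E → ℝ}

def QuasarConvexOn (K : Set E) (x₀ : E) (κ : ℝ) (f : E → ℝ) : Prop :=
  ∀ x ∈ K, f x + 1 / κ * ⟪gradient f x, x₀ - x⟫ ≤ f x₀

def StrongQuasarConvexOn (K : Set E) (x₀ : E) (κ μ : ℝ) (f : E → ℝ) : Prop :=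
  ∀ x ∈ K, f x + 1 / κ * ⟪gradient f x, x₀ - x⟫ + μ / 2 * ‖x₀ - x‖ ^ 2 ≤ f x₀

theorem StrongQuasarConvexOn.quasarConvexOn (h : StrongQuasarConvexOn K x₀ κ μ f) (hμ : 0 ≤ μ) :
    QuasarConvexOn K x₀ κ f := fun x hx => by
  nlinarith [h x hx, sq_nonneg ‖x₀ - x‖]

theorem StrongQuasarConvexOn.mono {κ' μ' : ℝ} (h : StrongQuasarConvexOn K x₀ κ μ f)
    (hmin : ∀ x ∈ K, f x₀ ≤ f x) (hκ' : 0 < κ') (hκ : κ' ≤ κ) (hμ : μ' ≤ κ / κ' * μ) :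
    StrongQuasarConvexOn K x₀ κ' μ' f := by
  intro x hx
  set T := ⟪gradient f x, x₀ - x⟫
  set r := ‖x₀ - x‖ ^ 2
  have hr : 0 ≤ r := sq_nonneg _
  have hc : 1 ≤ κ / κ' := (one_le_div hκ').2 hκ
  have hT : κ / κ' * (1 / κ * T) = 1 / κ' * T := by
    field_simp [(hκ'.trans_le hκ).ne']
  calc f x + 1 / κ' * T + μ' / 2 * r ≤ f x + κ / κ' * (1 / κ * T + μ / 2 * r) := by
        nlinarith
    _ ≤ f x + κ / κ' * (f x₀ - f x) := by gcongr; linarith [h x hx]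
    _ ≤ f x₀ := by nlinarith [hmin x hx]

end QuasarConvex

theorem mul_add_le_mul_of_mem_Icc {m M c c' T S Δ : ℝ} (hm : 0 < m) (hc : c ∈ Set.Icc m M)
    (hc' : m ≤ c') (hS : 0 ≤ S) (hΔ : Δ ≤ 0) (h : c * T + S ≤ c' * Δ) :
    M * T + S ≤ m * Δ := by
  have hmΔ : c' * Δ ≤ m * Δ := mul_le_mul_of_nonpos_right hc' hΔ
  have hT : T ≤ 0 := by nlinarith [hc.1]
  nlinarith [mul_le_mul_of_nonpos_right hc.2 hT]

section Ratio

variable {E : Type*} [NormedAddCommGroup E] [InnerProductSpace ℝ E] [CompleteSpace E]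

theorem mul_inner_gradient_div_add_le {g q : E → ℝ} {x y : E} {S : ℝ}
    (hg : DifferentiableAt ℝ g x) (hq : DifferentiableAt ℝ q x) (hqx : 0 < q x) (hqy : q y ≠ 0)
    (hgrem : S ≤ g y - g x - fderiv ℝ g x (y - x))
    (hqrem : g x * (q y - q x - fderiv ℝ q x (y - x)) ≤ 0) :
    q x * ⟪gradient (fun z => g z / q z) x, y - x⟫ + S ≤ q y * (g y / q y - g x / q x) := by
  rw [mul_div_sub_div_eq hg hq hqx.ne' hqy, inner_gradient_left, div_mul_eq_mul_div]
  have : g x * (q y - q x - fderiv ℝ q x (y - x)) / q x ≤ 0 :=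
    div_nonpos_of_nonpos_of_nonneg hqrem hqx.le
  linarith

theorem strongQuasarConvexOn_quadraticFun_div {A B : E →L[ℝ] E} {a b x₀ : E} {α β σ m M : ℝ}
    (hm : 0 < m) (hσ : 0 ≤ σ) (hA : ∀ z, σ * ‖z‖ ^ 2 ≤ ⟪A z, z⟫)
    (hx₀ : m ≤ quadraticFun B b β x₀)
    (hmin : ∀ x ∈ {x | m ≤ quadraticFun B b β x ∧ quadraticFun B b β x ≤ M},
      quadraticFun A a α x₀ / quadraticFun B b β x₀ ≤ quadraticFun A a α x / quadraticFun B b β x)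
    (hsign : ∀ x ∈ {x | m ≤ quadraticFun B b β x ∧ quadraticFun B b β x ≤ M},
      quadraticFun A a α x * ⟪B (x₀ - x), x₀ - x⟫ ≤ 0) :
    StrongQuasarConvexOn {x | m ≤ quadraticFun B b β x ∧ quadraticFun B b β x ≤ M} x₀
      (m / M) (σ / m) (fun x => quadraticFun A a α x / quadraticFun B b β x) := by
  intro x hx
  have hratio := mul_inner_gradient_div_add_le (S := σ / 2 * ‖x₀ - x‖ ^ 2)
    (hasFDerivAt_quadraticFun A a α x).differentiableAt
    (hasFDerivAt_quadraticFun B b β x).differentiableAt (hm.trans_le hx.1) (hm.trans_le hx₀).ne'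
    (by rw [quadraticFun_sub_sub_fderiv]; linarith [hA (x₀ - x)])
    (by rw [quadraticFun_sub_sub_fderiv]; linarith [hsign x hx])
  have key := mul_add_le_mul_of_mem_Icc hm hx hx₀ (by positivity) (sub_nonpos.2 (hmin x hx)) hratio
  beta_reduce
  rw [add_assoc, ← le_sub_iff_add_le', one_div_div]
  calc M / m * ⟪_, _⟫ + σ / m / 2 * ‖x₀ - x‖ ^ 2 = (M * ⟪_, _⟫ + σ / 2 * ‖x₀ - x‖ ^ 2) / m := by
        ring
    _ ≤ _ := (div_le_iff₀' hm).2 key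

end Ratio

theorem quadratic_fractional_strongly_quasar_convex_general
    (p : ℕ)
    (A B : EuclideanSpace ℝ (Fin p) →L[ℝ] EuclideanSpace ℝ (Fin p))
    (hApos : ∀ x : EuclideanSpace ℝ (Fin p), x ≠ 0 → 0 < ⟪A x, x⟫)
    (a b : EuclideanSpace ℝ (Fin p)) (α β : ℝ)
    (g q : EuclideanSpace ℝ (Fin p) → ℝ)
    (hg : ∀ x, g x = (1/2) * ⟪A x, x⟫ + ⟪a, x⟫ + α)
    (hq : ∀ x, q x = (1/2) * ⟪B x, x⟫ + ⟪b, x⟫ + β)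
    (f : EuclideanSpace ℝ (Fin p) → ℝ) (hf : ∀ x, f x = g x / q x)
    (m M : ℝ) (hm : 0 < m) (hmM : m < M)
    (K : Set (EuclideanSpace ℝ (Fin p)))
    (hK : K = {x : EuclideanSpace ℝ (Fin p) | m ≤ q x ∧ q x ≤ M})
    (σmin : ℝ)
    (hσmin : IsGreatest {c : ℝ | ∀ x : EuclideanSpace ℝ (Fin p),
      c * ‖x‖^2 ≤ ⟪A x, x⟫} σmin)
    (hcase : B = 0 ∨
      ((∀ x ∈ K, 0 ≤ g x) ∧ ∀ x : EuclideanSpace ℝ (Fin p), ⟪B x, x⟫ ≤ 0) ∨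
      ((∀ x ∈ K, g x ≤ 0) ∧ ∀ x : EuclideanSpace ℝ (Fin p), 0 ≤ ⟪B x, x⟫))
    (xstar : EuclideanSpace ℝ (Fin p)) (hxK : xstar ∈ K)
    (hmin : ∀ x ∈ K, f xstar ≤ f x) :
    (∀ x ∈ K, f x + (1 / (m / M)) * ⟪gradient f x, xstar - x⟫ ≤ f xstar) ∧
    (∀ x ∈ K, f x + (1 / ((m / M) / 2)) * ⟪gradient f x, xstar - x⟫
        + ((σmin / m) / 2) * ‖xstar - x‖^2 ≤ f xstar) ∧
    (∀ l : ℝ, l ∈ Set.Ioo (0:ℝ) 1 → ∀ x ∈ K,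
      f x + (1 / (l * (m / M))) * ⟪gradient f x, xstar - x⟫
        + (((l⁻¹ - 1) * σmin / (4 * M)) / 2) * ‖xstar - x‖^2 ≤ f xstar) := by
  obtain rfl : f = fun x => g x / q x := funext hf
  subst hK
  have hσ : 0 ≤ σmin := hσmin.2 fun z => by
    rcases eq_or_ne z 0 with rfl | hz
    · simp
    · simpa using (hApos z hz).le
  have hsign : ∀ x ∈ {x | m ≤ q x ∧ q x ≤ M}, g x * ⟪B (xstar - x), xstar - x⟫ ≤ 0 := by
    intro x hx
    rcases hcase with rfl | ⟨hgK, hB⟩ | ⟨hgK, hB⟩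
    · simp
    · exact mul_nonpos_of_nonneg_of_nonpos (hgK x hx) (hB _)
    · exact mul_nonpos_of_nonpos_of_nonneg (hgK x hx) (hB _)
  obtain rfl : g = quadraticFun A a α := funext hg
  obtain rfl : q = quadraticFun B b β := funext hq
  have hsqc := strongQuasarConvexOn_quadraticFun_div hm hσ hσmin.1 hxK.1 hmin hsign
  have hM : 0 < M := hm.trans hmM
  have hκ : 0 < m / M := div_pos hm hM
  refine ⟨hsqc.quasarConvexOn (div_nonneg hσ hm.le),
    hsqc.mono hmin (half_pos hκ) (half_le_self hκ.le) ?_,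
    fun l hl => hsqc.mono hmin (mul_pos hl.1 hκ) (mul_le_of_le_one_left hκ.le hl.2.le) ?_⟩
  · calc σmin / m ≤ 2 * (σmin / m) := le_mul_of_one_le_left (div_nonneg hσ hm.le) one_le_two
      _ = _ := by field_simp
  · have hl : 0 < l⁻¹ := inv_pos.2 hl.1
    calc (l⁻¹ - 1) * σmin / (4 * M) ≤ l⁻¹ * σmin / (4 * M) := by gcongr; linarith
      _ ≤ l⁻¹ * σmin / m := by gcongr; linarith
      _ = _ := by field_simp

/-- Quadratic fractional functions f = g/q are quasar-convex / strongly quasar-convex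
on K = {m ≤ q ≤ M} with explicit parameters: κ = m/M for quasar-convexity,
(κ/2, σ_min(A)/m) for strong quasar-convexity, and (λκ, (λ⁻¹−1)σ_min(A)/(4M)) for
every λ ∈ (0,1).  Here A is represented as a symmetric continuous linear operator
and σmin is its minimum eigenvalue, characterized as the greatest constant c with
⟨Ax, x⟩ ≥ c‖x‖² for all x. -/
theorem quadratic_fractional_strongly_quasar_convex
    (p : ℕ)
    (A B : EuclideanSpace ℝ (Fin p) →L[ℝ] EuclideanSpace ℝ (Fin p))
    (hAsymm : ∀ x y, ⟪A x, y⟫ = ⟪x, A y⟫) (hBsymm : ∀ x y, ⟪B x, y⟫ = ⟪x, B y⟫)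
    (hApos : ∀ x : EuclideanSpace ℝ (Fin p), x ≠ 0 → 0 < ⟪A x, x⟫)
    (a b : EuclideanSpace ℝ (Fin p)) (α β : ℝ)
    (g q : EuclideanSpace ℝ (Fin p) → ℝ)
    (hg : ∀ x, g x = (1/2) * ⟪A x, x⟫ + ⟪a, x⟫ + α)
    (hq : ∀ x, q x = (1/2) * ⟪B x, x⟫ + ⟪b, x⟫ + β)
    (f : EuclideanSpace ℝ (Fin p) → ℝ) (hf : ∀ x, f x = g x / q x)
    (m M : ℝ) (hm : 0 < m) (hmM : m < M)
    (K : Set (EuclideanSpace ℝ (Fin p)))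
    (hK : K = {x : EuclideanSpace ℝ (Fin p) | m ≤ q x ∧ q x ≤ M})
    (σmin : ℝ)
    (hσmin : IsGreatest {c : ℝ | ∀ x : EuclideanSpace ℝ (Fin p),
      c * ‖x‖^2 ≤ ⟪A x, x⟫} σmin)
    (hcase : B = 0 ∨
      ((∀ x ∈ K, 0 ≤ g x) ∧ ∀ x : EuclideanSpace ℝ (Fin p), ⟪B x, x⟫ ≤ 0) ∨
      ((∀ x ∈ K, g x ≤ 0) ∧ ∀ x : EuclideanSpace ℝ (Fin p), 0 ≤ ⟪B x, x⟫))
    (xstar : EuclideanSpace ℝ (Fin p)) (hxK : xstar ∈ K)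
    (hmin : ∀ x ∈ K, f xstar ≤ f x)
    (huniq : ∀ z ∈ K, (∀ x ∈ K, f z ≤ f x) → z = xstar) :
    (∀ x ∈ K, f x + (1 / (m / M)) * ⟪gradient f x, xstar - x⟫ ≤ f xstar) ∧
    (∀ x ∈ K, f x + (1 / ((m / M) / 2)) * ⟪gradient f x, xstar - x⟫
        + ((σmin / m) / 2) * ‖xstar - x‖^2 ≤ f xstar) ∧
    (∀ l : ℝ, l ∈ Set.Ioo (0:ℝ) 1 → ∀ x ∈ K,
      f x + (1 / (l * (m / M))) * ⟪gradient f x, xstar - x⟫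
        + (((l⁻¹ - 1) * σmin / (4 * M)) / 2) * ‖xstar - x‖^2 ≤ f xstar) :=
  quadratic_fractional_strongly_quasar_convex_general p A B hApos a b α β g q hg hq f hf m M hm hmM
    K hK σmin hσmin hcase xstar hxK hmin
end

section
/- (Dynamic regret of DOGD for Lipschitz quasar-convex losses.) In the DOGD setting described below, assume additionally that ‖∇f_t(x)‖ ≤ L for all x ∈ X and all t ∈ [T]. Then the dynamic regret of DOGD with constant step size η > 0 satisfies R^{NS}_T ≤ 2R²/(ηκ) + ((3R + ηL(d−1))/(ηκ)) V_T + ((L²d + 4(d−1)L²)/(2κ)) η T + (ηd/(2κ)) Λ_T + ((ηdL + 2R + 2η(d−1)L)/κ) Δ_T. -/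
/-!
Quasar-convexity bounds the regret of round `k` by `(1/κ) ⟪∇f_k(x_k), x_k - x*_k⟫`. The gradient
of round `k` is only used at its arrival round `s_k = k + d_k - 1`, so this inner product is split
into `⟪r_k, x_{s_k} - u_{s_k}⟫`, plus the comparator drift `‖u_{s_k} - x*_k‖`, the iterate drift
`‖x_{s_k} - x_k‖` and the noise `⟪m_k, u_{s_k} - x_{s_k}⟫`, where `u_t = x*_{min t T}`. Regrouped by
arrival round, the first terms are the linear regret of projected gradient descent with directions
`g_t = ∑_{k ∈ F_t} r_k` against the moving comparator `u`, which the usual telescoping of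
`‖x_t - u_t‖²` bounds by `(4R² + 4R V_T + η² ∑ ‖g_t‖²) / (2η)`; at most `d` gradients arrive
together, so `∑ ‖g_t‖² ≤ d ∑ ‖r_k‖²`. Both drifts are sums of consecutive steps over windows of
length at most `d - 1`, and every step lies in at most `d - 1` windows: this gives `(d - 1) V_T`
and `(d - 1) η ∑ ‖r_k‖`, since one projected step moves the iterate by at most `η ‖g_t‖`.
-/

open Finset RealInnerProductSpace

theorem norm_sub_le_two_mul {F : Type*} [SeminormedAddCommGroup F] {X : Set F} {R : ℝ}
    (hXR : ∀ z ∈ X, ‖z‖ ≤ R) {a b : F} (ha : a ∈ X) (hb : b ∈ X) : ‖a - b‖ ≤ 2 * R := by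
  linarith [norm_sub_le a b, hXR a ha, hXR b hb]

theorem sum_norm_le_of_le {ι F : Type*} [SeminormedAddCommGroup F] {s : Finset ι} {r : ι → F}
    {L : ℝ} {δ : ι → ℝ} (hr : ∀ k ∈ s, ‖r k‖ ≤ L + δ k) :
    ∑ k ∈ s, ‖r k‖ ≤ #s * L + ∑ k ∈ s, δ k :=
  (sum_le_sum hr).trans_eq (by rw [sum_add_distrib, sum_const, nsmul_eq_mul])

theorem sum_sq_norm_le_of_le {ι F : Type*} [SeminormedAddCommGroup F] {s : Finset ι} {r : ι → F}
    {L : ℝ} {δ : ι → ℝ} (hr : ∀ k ∈ s, ‖r k‖ ≤ L + δ k) :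
    ∑ k ∈ s, ‖r k‖ ^ 2 ≤ #s * L ^ 2 + 2 * L * ∑ k ∈ s, δ k + ∑ k ∈ s, δ k ^ 2 :=
  (sum_le_sum fun k hk => pow_le_pow_left₀ (norm_nonneg _) (hr k hk) 2).trans_eq (by
    simp only [add_sq, sum_add_distrib, sum_const, nsmul_eq_mul, ← mul_sum])

variable {E : Type*} [NormedAddCommGroup E]

def IsNearestPoint (X : Set E) (y p : E) : Prop :=
  p ∈ X ∧ ∀ z ∈ X, ‖p - y‖ ≤ ‖z - y‖

theorem IsNearestPoint.self {X : Set E} {y : E} (hy : y ∈ X) : IsNearestPoint X y y :=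
  ⟨hy, fun z _ => by simp⟩

variable [InnerProductSpace ℝ E]

namespace IsNearestPoint

variable {X : Set E} {y p w : E}

theorem inner_sub_le_zero (hX : Convex ℝ X) (hp : IsNearestPoint X y p) (hw : w ∈ X) :
    ⟪y - p, w - p⟫ ≤ 0 := by
  have : Nonempty X := ⟨⟨p, hp.1⟩⟩
  have hinf : ‖y - p‖ = ⨅ z : X, ‖y - z‖ :=
    le_antisymm (le_ciInf fun z => by simpa only [norm_sub_rev y] using hp.2 z z.2)
      (ciInf_le (f := fun z : X => ‖y - z‖) ⟨0, by rintro _ ⟨z, rfl⟩; positivity⟩ ⟨p, hp.1⟩)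
  exact (norm_eq_iInf_iff_real_inner_le_zero hX hp.1).1 hinf w hw

theorem sq_norm_sub_le (hX : Convex ℝ X) (hp : IsNearestPoint X y p) (hw : w ∈ X) :
    ‖p - w‖ ^ 2 ≤ ‖y - w‖ ^ 2 := by
  have h := hp.inner_sub_le_zero hX hw
  have hsplit : y - w = (y - p) - (w - p) := by abel
  rw [hsplit, norm_sub_sq_real (y - p), norm_sub_rev p w]
  nlinarith [sq_nonneg ‖y - p‖]

theorem norm_sub_le (hX : Convex ℝ X) (hp : IsNearestPoint X y p) (hw : w ∈ X) :
    ‖p - w‖ ≤ ‖y - w‖ :=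
  (pow_le_pow_iff_left₀ (norm_nonneg _) (norm_nonneg _) two_ne_zero).1 (hp.sq_norm_sub_le hX hw)

variable {x g : E} {η : ℝ}

theorem sq_norm_sub_le_of_step (hX : Convex ℝ X) (hp : IsNearestPoint X (x - η • g) p)
    (hw : w ∈ X) : ‖p - w‖ ^ 2 ≤ ‖x - w‖ ^ 2 - 2 * η * ⟪g, x - w⟫ + η ^ 2 * ‖g‖ ^ 2 := by
  have h := hp.sq_norm_sub_le hX hw
  rwa [sub_right_comm, norm_sub_sq_real (x - w), real_inner_smul_right, real_inner_comm, norm_smul,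
    Real.norm_eq_abs, mul_pow, sq_abs, ← mul_assoc] at h

theorem norm_sub_le_of_step (hX : Convex ℝ X) (hη : 0 ≤ η) (hp : IsNearestPoint X (x - η • g) p)
    (hx : x ∈ X) : ‖p - x‖ ≤ η * ‖g‖ := by
  simpa [norm_smul, abs_of_nonneg hη] using hp.norm_sub_le hX hx

theorem two_mul_inner_le {R : ℝ} {v : E} (hX : Convex ℝ X) (hXR : ∀ z ∈ X, ‖z‖ ≤ R)
    (hp : IsNearestPoint X (x - η • g) p) (hv : v ∈ X) (hw : w ∈ X) :
    2 * η * ⟪g, x - v⟫ ≤ ‖x - v‖ ^ 2 - ‖p - w‖ ^ 2 + 4 * R * ‖w - v‖ + η ^ 2 * ‖g‖ ^ 2 := by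
  have hproj := hp.sq_norm_sub_le_of_step hX hv
  have htri : ‖p - w‖ ≤ ‖p - v‖ + ‖w - v‖ := by
    rw [norm_sub_rev w v]; exact norm_sub_le_norm_sub_add_norm_sub p v w
  have hdiam : ‖p - w‖ + ‖p - v‖ ≤ 4 * R := by
    linarith [norm_sub_le_two_mul hXR hp.1 hw, norm_sub_le_two_mul hXR hp.1 hv]
  nlinarith [mul_le_mul_of_nonneg_left hdiam (norm_nonneg (w - v)), norm_nonneg (p - w),
    norm_nonneg (p - v)]

end IsNearestPoint

section ProjectedGradient

variable {X : Set E} {η R : ℝ} {x g u : ℕ → E}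

theorem mem_of_isNearestPoint_step (hx1 : x 1 ∈ X)
    (hstep : ∀ t, 1 ≤ t → IsNearestPoint X (x t - η • g t) (x (t + 1))) :
    ∀ t, 1 ≤ t → x t ∈ X
  | 1, _ => hx1
  | t + 2, _ => (hstep (t + 1) (by omega)).1

theorem two_mul_sum_inner_le_of_isNearestPoint_step (hX : Convex ℝ X)
    (hXR : ∀ z ∈ X, ‖z‖ ≤ R) (hx1 : x 1 ∈ X)
    (hstep : ∀ t, 1 ≤ t → IsNearestPoint X (x t - η • g t) (x (t + 1)))
    (hu : ∀ t, 1 ≤ t → u t ∈ X) (n : ℕ) :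
    2 * η * ∑ t ∈ Icc 1 n, ⟪g t, x t - u t⟫ ≤
      4 * R ^ 2 + 4 * R * ∑ t ∈ Icc 1 n, ‖u (t + 1) - u t‖ + η ^ 2 * ∑ t ∈ Icc 1 n, ‖g t‖ ^ 2 := by
  have hround : ∀ t ∈ Icc 1 n, 2 * η * ⟪g t, x t - u t⟫ ≤
      (‖x t - u t‖ ^ 2 - ‖x (t + 1) - u (t + 1)‖ ^ 2) + 4 * R * ‖u (t + 1) - u t‖
        + η ^ 2 * ‖g t‖ ^ 2 := fun t ht => by
    have ht1 := (mem_Icc.1 ht).1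
    exact (hstep t ht1).two_mul_inner_le hX hXR (hu t ht1) (hu (t + 1) (by omega))
  have htel : ∑ t ∈ Icc 1 n, (‖x t - u t‖ ^ 2 - ‖x (t + 1) - u (t + 1)‖ ^ 2) =
      ‖x 1 - u 1‖ ^ 2 - ‖x (n + 1) - u (n + 1)‖ ^ 2 := by
    rw [← Ico_add_one_right_eq_Icc, ← neg_sub, ← sum_Ico_sub (fun t => ‖x t - u t‖ ^ 2)
      (by omega : 1 ≤ n + 1), ← sum_neg_distrib]
    simp only [neg_sub]
  have hstart : ‖x 1 - u 1‖ ^ 2 ≤ 4 * R ^ 2 := by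
    nlinarith [norm_sub_le_two_mul hXR hx1 (hu 1 le_rfl), norm_nonneg (x 1 - u 1)]
  calc 2 * η * ∑ t ∈ Icc 1 n, ⟪g t, x t - u t⟫
      ≤ ∑ t ∈ Icc 1 n, ((‖x t - u t‖ ^ 2 - ‖x (t + 1) - u (t + 1)‖ ^ 2)
          + 4 * R * ‖u (t + 1) - u t‖ + η ^ 2 * ‖g t‖ ^ 2) := by
        rw [mul_sum]; exact sum_le_sum hround
    _ = ‖x 1 - u 1‖ ^ 2 - ‖x (n + 1) - u (n + 1)‖ ^ 2
          + 4 * R * ∑ t ∈ Icc 1 n, ‖u (t + 1) - u t‖ + η ^ 2 * ∑ t ∈ Icc 1 n, ‖g t‖ ^ 2 := by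
        rw [sum_add_distrib, sum_add_distrib, htel, mul_sum, mul_sum]
    _ ≤ _ := by nlinarith [sq_nonneg ‖x (n + 1) - u (n + 1)‖]

theorem sum_norm_succ_sub_le_of_isNearestPoint_step (hX : Convex ℝ X) (hη : 0 ≤ η)
    (hx1 : x 1 ∈ X) (hstep : ∀ t, 1 ≤ t → IsNearestPoint X (x t - η • g t) (x (t + 1)))
    (n : ℕ) : ∑ t ∈ Icc 1 n, ‖x (t + 1) - x t‖ ≤ η * ∑ t ∈ Icc 1 n, ‖g t‖ := by
  rw [mul_sum]
  refine sum_le_sum fun t ht => ?_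
  have ht1 := (mem_Icc.1 ht).1
  exact (hstep t ht1).norm_sub_le_of_step hX hη (mem_of_isNearestPoint_step hx1 hstep t ht1)

/-- Skipping the update is the projected step in direction `0`, as long as the iterate is in `X`. -/
theorem isNearestPoint_step_of_lazy {s : ℕ → Finset ℕ} {r : ℕ → E} (hx1 : x 1 ∈ X)
    (hupd : ∀ t, 1 ≤ t →
      ((s t).Nonempty → IsNearestPoint X (x t - η • ∑ k ∈ s t, r k) (x (t + 1))) ∧
      (¬ (s t).Nonempty → x (t + 1) = x t)) :
    ∀ t, 1 ≤ t → IsNearestPoint X (x t - η • ∑ k ∈ s t, r k) (x (t + 1)) := by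
  have hmem : ∀ t, 1 ≤ t → x t ∈ X := by
    intro t ht
    induction t, ht using Nat.le_induction with
    | base => exact hx1
    | succ t ht ih =>
      by_cases hs : (s t).Nonempty
      · exact ((hupd t ht).1 hs).1
      · rw [(hupd t ht).2 hs]; exact ih
  intro t ht
  by_cases hs : (s t).Nonempty
  · exact (hupd t ht).1 hs
  · rw [(hupd t ht).2 hs, not_nonempty_iff_eq_empty.1 hs, sum_empty, smul_zero, sub_zero]
    exact .self (hmem t ht)

end ProjectedGradient

theorem sum_sum_Ico_le_mul_sum {c : ℕ → ℝ} (hc : ∀ j, 0 ≤ c j) {T D N : ℕ} {w : ℕ → ℕ}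
    (hw : ∀ k ∈ Icc 1 T, w k ≤ k + D) (hN : T + D ≤ N + 1) :
    ∑ k ∈ Icc 1 T, ∑ j ∈ Ico k (w k), c j ≤ D * ∑ j ∈ Icc 1 N, c j :=
  calc ∑ k ∈ Icc 1 T, ∑ j ∈ Ico k (w k), c j
      ≤ ∑ k ∈ Icc 1 T, ∑ i ∈ range D, c (k + i) := sum_le_sum fun k hk => by
        rw [← add_tsub_cancel_left k D, ← sum_Ico_eq_sum_range]
        exact sum_le_sum_of_subset_of_nonneg (Ico_subset_Ico_right (hw k hk)) fun j _ _ => hc j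
    _ = ∑ i ∈ range D, ∑ k ∈ Icc 1 T, c (k + i) := sum_comm
    _ ≤ ∑ i ∈ range D, ∑ j ∈ Icc 1 N, c j := sum_le_sum fun i hi => by
        rw [show ∑ k ∈ Icc 1 T, c (k + i) = ∑ j ∈ Icc (1 + i) (T + i), c j by
          rw [← map_add_right_Icc, sum_map]; rfl]
        refine sum_le_sum_of_subset_of_nonneg (Icc_subset_Icc (by omega) ?_) fun j _ _ => hc j
        have := mem_range.1 hi
        omega
    _ = D * ∑ j ∈ Icc 1 N, c j := by rw [sum_const, card_range, nsmul_eq_mul]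

section Delays

variable {T d : ℕ} {dl : ℕ → ℕ}

/-- The paper's `F_t`. -/
def arrivals (T : ℕ) (dl : ℕ → ℕ) (t : ℕ) : Finset ℕ :=
  (Icc 1 T).filter fun k => k + dl k - 1 = t

theorem sum_sum_arrivals {M : Type*} [AddCommMonoid M] (hdl : ∀ k ∈ Icc 1 T, 1 ≤ dl k)
    (hdub : ∀ k ∈ Icc 1 T, dl k ≤ d) (φ : ℕ → M) :
    ∑ t ∈ Icc 1 (T + d - 1), ∑ k ∈ arrivals T dl t, φ k = ∑ k ∈ Icc 1 T, φ k :=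
  sum_fiberwise_of_maps_to (fun k hk => by
    have := hdl k hk; have := hdub k hk; rw [mem_Icc] at hk ⊢; omega) φ

theorem card_arrivals_le (hdl : ∀ k ∈ Icc 1 T, 1 ≤ dl k) (hdub : ∀ k ∈ Icc 1 T, dl k ≤ d)
    (t : ℕ) : #(arrivals T dl t) ≤ d :=
  calc #(arrivals T dl t) ≤ #(Icc (t + 1 - d) t) := card_le_card fun k hk => by
        obtain ⟨hkT, hkt⟩ := mem_filter.1 hk
        have := hdl k hkT; have := hdub k hkT; rw [mem_Icc] at hkT ⊢; omega
    _ ≤ d := by rw [Nat.card_Icc]; omega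

theorem sum_norm_sub_delay_le {F : Type*} [SeminormedAddCommGroup F] (v : ℕ → F)
    (hdl : ∀ k ∈ Icc 1 T, 1 ≤ dl k) (hdub : ∀ k ∈ Icc 1 T, dl k ≤ d) :
    ∑ k ∈ Icc 1 T, ‖v (k + dl k - 1) - v k‖ ≤
      ((d - 1 : ℕ) : ℝ) * ∑ j ∈ Icc 1 (T + d - 1), ‖v (j + 1) - v j‖ := by
  refine le_trans (sum_le_sum fun k hk => ?_) (sum_sum_Ico_le_mul_sum (fun j => norm_nonneg _)
    (w := fun k => k + dl k - 1) (fun k hk => by have := hdub k hk; omega) (by omega))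
  have := hdl k hk
  calc ‖v (k + dl k - 1) - v k‖ = dist (v k) (v (k + dl k - 1)) := by rw [dist_comm, dist_eq_norm]
    _ ≤ ∑ j ∈ Ico k (k + dl k - 1), dist (v j) (v (j + 1)) := dist_le_Ico_sum_dist v (by omega)
    _ = ∑ j ∈ Ico k (k + dl k - 1), ‖v (j + 1) - v j‖ :=
      sum_congr rfl fun j _ => by rw [dist_comm, dist_eq_norm]

theorem sum_norm_sum_arrivals_le {F : Type*} [SeminormedAddCommGroup F] (r : ℕ → F)
    (hdl : ∀ k ∈ Icc 1 T, 1 ≤ dl k) (hdub : ∀ k ∈ Icc 1 T, dl k ≤ d) :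
    ∑ t ∈ Icc 1 (T + d - 1), ‖∑ k ∈ arrivals T dl t, r k‖ ≤ ∑ k ∈ Icc 1 T, ‖r k‖ :=
  (sum_le_sum fun _ _ => norm_sum_le _ _).trans_eq (sum_sum_arrivals hdl hdub _)

theorem sum_sq_norm_sum_arrivals_le {F : Type*} [SeminormedAddCommGroup F] (r : ℕ → F)
    (hdl : ∀ k ∈ Icc 1 T, 1 ≤ dl k) (hdub : ∀ k ∈ Icc 1 T, dl k ≤ d) :
    ∑ t ∈ Icc 1 (T + d - 1), ‖∑ k ∈ arrivals T dl t, r k‖ ^ 2 ≤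
      d * ∑ k ∈ Icc 1 T, ‖r k‖ ^ 2 := by
  calc ∑ t ∈ Icc 1 (T + d - 1), ‖∑ k ∈ arrivals T dl t, r k‖ ^ 2
      ≤ ∑ t ∈ Icc 1 (T + d - 1), d * ∑ k ∈ arrivals T dl t, ‖r k‖ ^ 2 :=
        sum_le_sum fun t _ => calc
          ‖∑ k ∈ arrivals T dl t, r k‖ ^ 2 ≤ (∑ k ∈ arrivals T dl t, ‖r k‖) ^ 2 := by
            gcongr; exact norm_sum_le _ _
          _ ≤ #(arrivals T dl t) * ∑ k ∈ arrivals T dl t, ‖r k‖ ^ 2 := sq_sum_le_card_mul_sum_sq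
          _ ≤ d * ∑ k ∈ arrivals T dl t, ‖r k‖ ^ 2 := by
            gcongr; exact_mod_cast card_arrivals_le hdl hdub t
    _ = d * ∑ k ∈ Icc 1 T, ‖r k‖ ^ 2 := by rw [← mul_sum, sum_sum_arrivals hdl hdub]

variable {X : Set E} {η R : ℝ} {x r u : ℕ → E}

theorem two_mul_sum_inner_delayed_le (hX : Convex ℝ X) (hXR : ∀ z ∈ X, ‖z‖ ≤ R) (hx1 : x 1 ∈ X)
    (hstep : ∀ t, 1 ≤ t → IsNearestPoint X (x t - η • ∑ k ∈ arrivals T dl t, r k) (x (t + 1)))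
    (hu : ∀ t, 1 ≤ t → u t ∈ X)
    (hdl : ∀ k ∈ Icc 1 T, 1 ≤ dl k) (hdub : ∀ k ∈ Icc 1 T, dl k ≤ d) :
    2 * η * ∑ k ∈ Icc 1 T, ⟪r k, x (k + dl k - 1) - u (k + dl k - 1)⟫ ≤
      4 * R ^ 2 + 4 * R * ∑ t ∈ Icc 1 (T + d - 1), ‖u (t + 1) - u t‖
        + η ^ 2 * (d * ∑ k ∈ Icc 1 T, ‖r k‖ ^ 2) := by
  have hreindex : ∑ k ∈ Icc 1 T, ⟪r k, x (k + dl k - 1) - u (k + dl k - 1)⟫ =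
      ∑ t ∈ Icc 1 (T + d - 1), ⟪∑ k ∈ arrivals T dl t, r k, x t - u t⟫ := by
    rw [← sum_sum_arrivals hdl hdub]
    refine sum_congr rfl fun t _ => ?_
    rw [sum_inner]
    exact sum_congr rfl fun k hk => by rw [(mem_filter.1 hk).2]
  rw [hreindex]
  refine (two_mul_sum_inner_le_of_isNearestPoint_step hX hXR hx1 hstep hu _).trans ?_
  gcongr
  exact sum_sq_norm_sum_arrivals_le r hdl hdub

theorem sum_norm_succ_sub_delayed_le (hX : Convex ℝ X) (hη : 0 ≤ η) (hx1 : x 1 ∈ X)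
    (hstep : ∀ t, 1 ≤ t → IsNearestPoint X (x t - η • ∑ k ∈ arrivals T dl t, r k) (x (t + 1)))
    (hdl : ∀ k ∈ Icc 1 T, 1 ≤ dl k) (hdub : ∀ k ∈ Icc 1 T, dl k ≤ d) :
    ∑ t ∈ Icc 1 (T + d - 1), ‖x (t + 1) - x t‖ ≤ η * ∑ k ∈ Icc 1 T, ‖r k‖ :=
  (sum_norm_succ_sub_le_of_isNearestPoint_step hX hη hx1 hstep _).trans
    (mul_le_mul_of_nonneg_left (sum_norm_sum_arrivals_le r hdl hdub) hη)

end Delays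

theorem sub_le_of_quasarConvex_delayed {φ : E → ℝ} {κ L R δ : ℝ} {G m a b c e : E} (hκ : 0 < κ)
    (hqc : φ a + (1 / κ) * ⟪G, e - a⟫ ≤ φ e) (hG : ‖G‖ ≤ L) (hm : ‖m‖ ≤ δ)
    (hcb : ‖c - b‖ ≤ 2 * R) :
    φ a - φ e ≤ (1 / κ) * (⟪G + m, b - c⟫ + L * ‖c - e‖ + L * ‖b - a‖ + 2 * R * δ) := by
  have hsplit : ⟪G, a - e⟫ = ⟪G + m, b - c⟫ + ⟪G, c - e⟫ - ⟪G, b - a⟫ + ⟪m, c - b⟫ := by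
    simp only [inner_add_left, inner_sub_right]; ring
  have hce : ⟪G, c - e⟫ ≤ L * ‖c - e‖ :=
    (real_inner_le_norm _ _).trans (mul_le_mul_of_nonneg_right hG (norm_nonneg _))
  have hba : -⟪G, b - a⟫ ≤ L * ‖b - a‖ := by
    rw [← inner_neg_right]
    exact (real_inner_le_norm _ _).trans (by rw [norm_neg]; gcongr)
  have hmcb : ⟪m, c - b⟫ ≤ 2 * R * δ :=
    (real_inner_le_norm _ _).trans (by nlinarith [norm_nonneg m, norm_nonneg (c - b)])
  have hae : φ a - φ e ≤ (1 / κ) * ⟪G, a - e⟫ := by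
    rw [← neg_sub e a, inner_neg_right]; linarith
  exact hae.trans (by gcongr; linarith)

theorem sum_sub_le_of_quasarConvex_delayed {ι : Type*} {s : Finset ι} {φ : ι → E → ℝ}
    {G m a b c e : ι → E} {κ L R : ℝ} {δ : ι → ℝ} (hκ : 0 < κ)
    (hqc : ∀ k ∈ s, φ k (a k) + (1 / κ) * ⟪G k, e k - a k⟫ ≤ φ k (e k))
    (hG : ∀ k ∈ s, ‖G k‖ ≤ L) (hm : ∀ k ∈ s, ‖m k‖ ≤ δ k) (hcb : ∀ k ∈ s, ‖c k - b k‖ ≤ 2 * R) :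
    ∑ k ∈ s, (φ k (a k) - φ k (e k)) ≤
      (1 / κ) * (∑ k ∈ s, ⟪G k + m k, b k - c k⟫ + L * ∑ k ∈ s, ‖c k - e k‖
        + L * ∑ k ∈ s, ‖b k - a k‖ + 2 * R * ∑ k ∈ s, δ k) := by
  simp only [mul_sum, ← sum_add_distrib]
  exact sum_le_sum fun k hk =>
    sub_le_of_quasarConvex_delayed hκ (hqc k hk) (hG k hk) (hm k hk) (hcb k hk)

theorem sum_norm_sub_min_eq {F : Type*} [SeminormedAddCommGroup F] (v : ℕ → F) {T N : ℕ}
    (hN : T - 1 ≤ N) :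
    ∑ t ∈ Icc 1 N, ‖v (min (t + 1) T) - v (min t T)‖ = ∑ t ∈ Icc 1 (T - 1), ‖v (t + 1) - v t‖ := by
  rw [← sum_subset (Icc_subset_Icc le_rfl hN) fun t ht hnot => ?_]
  · refine sum_congr rfl fun t ht => ?_
    rw [mem_Icc] at ht
    rw [min_eq_left (by omega : t + 1 ≤ T), min_eq_left (by omega : t ≤ T)]
  · rw [mem_Icc] at ht hnot
    rw [min_eq_right (by omega : T ≤ t + 1), min_eq_right (by omega : T ≤ t), sub_self, norm_zero]

theorem dogd_bound_of_estimates {R η κ L D V N Δ Λ S A B P Q : ℝ} (hR : 0 ≤ R) (hη : 0 < η)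
    (hκ : 0 < κ) (hL : 0 ≤ L) (hD : 1 ≤ D) (hV : 0 ≤ V) (hN : 0 ≤ N) (hΔ : 0 ≤ Δ)
    (hS : 2 * η * S ≤ 4 * R ^ 2 + 4 * R * V + η ^ 2 * (D * Q))
    (hQ : Q ≤ N * L ^ 2 + 2 * L * Δ + Λ) (hA : A ≤ (D - 1) * V) (hB : B ≤ (D - 1) * P)
    (hP : P ≤ η * (N * L + Δ)) :
    (1 / κ) * (S + L * A + L * B + 2 * R * Δ) ≤
      2 * R ^ 2 / (η * κ) + ((3 * R + η * L * (D - 1)) / (η * κ)) * V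
      + ((L ^ 2 * D + 4 * (D - 1) * L ^ 2) / (2 * κ)) * η * N + (η * D / (2 * κ)) * Λ
      + ((η * D * L + 2 * R + 2 * η * (D - 1) * L) / κ) * Δ := by
  have hD1 : 0 ≤ D - 1 := by linarith
  have hS' : S ≤ (4 * R ^ 2 + 4 * R * V + η ^ 2 * (D * (N * L ^ 2 + 2 * L * Δ + Λ))) / (2 * η) := by
    rw [le_div_iff₀ (by positivity)]
    nlinarith [mul_le_mul_of_nonneg_left hQ (by positivity : 0 ≤ η ^ 2 * D)]
  have hLA : L * A ≤ L * ((D - 1) * V) := mul_le_mul_of_nonneg_left hA hL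
  have hLB : L * B ≤ L * ((D - 1) * (η * (N * L + Δ))) :=
    mul_le_mul_of_nonneg_left (hB.trans (mul_le_mul_of_nonneg_left hP hD1)) hL
  -- the stated constants exceed the estimates by this nonnegative slack
  have hslack : 0 ≤ R * V / η + η * (D - 1) * L ^ 2 * N + η * (D - 1) * L * Δ := by positivity
  calc (1 / κ) * (S + L * A + L * B + 2 * R * Δ)
      ≤ (1 / κ) * ((4 * R ^ 2 + 4 * R * V + η ^ 2 * (D * (N * L ^ 2 + 2 * L * Δ + Λ))) / (2 * η)
          + L * ((D - 1) * V) + L * ((D - 1) * (η * (N * L + Δ))) + 2 * R * Δ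
          + (R * V / η + η * (D - 1) * L ^ 2 * N + η * (D - 1) * L * Δ)) :=
        mul_le_mul_of_nonneg_left (by linarith) (by positivity)
    _ = _ := by field_simp; ring

theorem dogd_dynamic_regret_lipschitz_general
    (p T : ℕ) (hT : 1 ≤ T)
    (X : Set (EuclideanSpace ℝ (Fin p)))
    (hXconv : Convex ℝ X)
    (R : ℝ) (hR : 0 < R) (hXR : ∀ z ∈ X, ‖z‖ ≤ R)
    -- loss functions and their minimizers over X
    (f : ℕ → EuclideanSpace ℝ (Fin p) → ℝ)
    (xs : ℕ → EuclideanSpace ℝ (Fin p))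
    (hxs : ∀ t ∈ Finset.Icc 1 T, xs t ∈ X ∧ ∀ z ∈ X, f t (xs t) ≤ f t z)
    -- quasar-convexity with respect to the minimizers
    (κ : ℝ) (hκ0 : 0 < κ)
    (hqc : ∀ t ∈ Finset.Icc 1 T, ∀ z ∈ X,
      f t z + (1/κ) * ⟪gradient (f t) z, xs t - z⟫ ≤ f t (xs t))
    -- delays: d is the maximum delay
    (dl : ℕ → ℕ) (hdl : ∀ t ∈ Finset.Icc 1 T, 1 ≤ dl t)
    (d : ℕ) (hdub : ∀ t ∈ Finset.Icc 1 T, dl t ≤ d)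
    -- noisy gradient feedback r_t = ∇f_t(x_t) + m_t with ‖m_t‖ ≤ δ_t
    (mm : ℕ → EuclideanSpace ℝ (Fin p)) (δ : ℕ → ℝ)
    (hmm : ∀ t ∈ Finset.Icc 1 T, ‖mm t‖ ≤ δ t)
    -- iterates with constant step size η: projected update using received gradients
    (x : ℕ → EuclideanSpace ℝ (Fin p))
    (η : ℝ) (hη : 0 < η)
    (hx1 : x 1 ∈ X)
    (hupd : ∀ t : ℕ, 1 ≤ t →
      (((Finset.Icc 1 T).filter fun k => k + dl k - 1 = t).Nonempty →
        x (t+1) ∈ X ∧ ∀ z ∈ X,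
          ‖x (t+1) - (x t - η • ∑ k ∈ (Finset.Icc 1 T).filter
              (fun k => k + dl k - 1 = t), (gradient (f k) (x k) + mm k))‖ ≤
          ‖z - (x t - η • ∑ k ∈ (Finset.Icc 1 T).filter
              (fun k => k + dl k - 1 = t), (gradient (f k) (x k) + mm k))‖) ∧
      (¬ ((Finset.Icc 1 T).filter fun k => k + dl k - 1 = t).Nonempty →
        x (t+1) = x t))
    -- Lipschitz gradients: ‖∇f_t‖ ≤ L on X
    (L : ℝ) (hL : ∀ t ∈ Finset.Icc 1 T, ∀ z ∈ X, ‖gradient (f t) z‖ ≤ L) :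
    -- dynamic regret bound
    ∑ t ∈ Finset.Icc 1 T, (f t (x t) - f t (xs t)) ≤
      2 * R^2 / (η * κ)
      + ((3 * R + η * L * ((d : ℝ) - 1)) / (η * κ)) *
          (∑ t ∈ Finset.Icc 1 (T - 1), ‖xs (t+1) - xs t‖)
      + ((L^2 * (d : ℝ) + 4 * ((d : ℝ) - 1) * L^2) / (2 * κ)) * η * (T : ℝ)
      + (η * (d : ℝ) / (2 * κ)) * (∑ t ∈ Finset.Icc 1 T, (δ t)^2)
      + ((η * (d : ℝ) * L + 2 * R + 2 * η * ((d : ℝ) - 1) * L) / κ) *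
          (∑ t ∈ Finset.Icc 1 T, δ t) := by
  set r : ℕ → EuclideanSpace ℝ (Fin p) := fun k => gradient (f k) (x k) + mm k
  -- the comparator stays at `xs T` while the last gradients are still arriving
  set u : ℕ → EuclideanSpace ℝ (Fin p) := fun t => xs (min t T)
  have h1T : 1 ∈ Icc 1 T := mem_Icc.2 ⟨le_rfl, hT⟩
  have hd : 1 ≤ d := (hdl 1 h1T).trans (hdub 1 h1T)
  have hstep := isNearestPoint_step_of_lazy (s := arrivals T dl) (r := r) hx1 hupd
  have hxX := mem_of_isNearestPoint_step hx1 hstep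
  have huX : ∀ t, 1 ≤ t → u t ∈ X := fun t ht =>
    (hxs _ (mem_Icc.2 ⟨le_min ht hT, min_le_right _ _⟩)).1
  have hr : ∀ k ∈ Icc 1 T, ‖r k‖ ≤ L + δ k := fun k hk =>
    norm_add_le_of_le (hL k hk _ (hxX k (mem_Icc.1 hk).1)) (hmm k hk)
  have hcard : ((#(Icc 1 T) : ℕ) : ℝ) = T := by simp
  have hdcast : ((d - 1 : ℕ) : ℝ) = d - 1 := by rw [Nat.cast_sub hd, Nat.cast_one]
  have hV : ∑ t ∈ Icc 1 (T + d - 1), ‖u (t + 1) - u t‖ =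
      ∑ t ∈ Icc 1 (T - 1), ‖xs (t + 1) - xs t‖ := sum_norm_sub_min_eq xs (by omega)
  have hcomp : ∑ k ∈ Icc 1 T, ‖u (k + dl k - 1) - xs k‖ =
      ∑ k ∈ Icc 1 T, ‖u (k + dl k - 1) - u k‖ :=
    sum_congr rfl fun k hk => by simp only [u, min_eq_left (mem_Icc.1 hk).2]
  refine (sum_sub_le_of_quasarConvex_delayed (m := mm) (R := R) (b := fun k => x (k + dl k - 1))
    (c := fun k => u (k + dl k - 1)) hκ0 (fun k hk => hqc k hk _ (hxX k (mem_Icc.1 hk).1))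
    (fun k hk => hL k hk _ (hxX k (mem_Icc.1 hk).1)) hmm fun k hk => ?_).trans ?_
  · have hs : 1 ≤ k + dl k - 1 := by have := hdl k hk; have := (mem_Icc.1 hk).1; omega
    exact norm_sub_le_two_mul hXR (huX _ hs) (hxX _ hs)
  rw [hcomp]
  exact dogd_bound_of_estimates hR.le hη hκ0 ((norm_nonneg _).trans (hL 1 h1T _ hx1))
    (by exact_mod_cast hd) (sum_nonneg fun _ _ => norm_nonneg _) (Nat.cast_nonneg T)
    (sum_nonneg fun k hk => (norm_nonneg _).trans (hmm k hk))
    (hV ▸ two_mul_sum_inner_delayed_le hXconv hXR hx1 hstep huX hdl hdub)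
    (hcard ▸ sum_sq_norm_le_of_le hr) (hV ▸ hdcast ▸ sum_norm_sub_delay_le u hdl hdub)
    (hdcast ▸ sum_norm_sub_delay_le x hdl hdub)
    ((sum_norm_succ_sub_delayed_le hXconv hη.le hx1 hstep hdl hdub).trans
      (mul_le_mul_of_nonneg_left (hcard ▸ sum_norm_le_of_le hr) hη.le))

/-- Dynamic regret bound for delayed online gradient descent (DOGD) with noisy
gradients on L-Lipschitz quasar-convex losses (Theorem 4.1(1)). -/
theorem dogd_dynamic_regret_lipschitz
    (p T : ℕ) (hT : 1 ≤ T)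
    (X : Set (EuclideanSpace ℝ (Fin p)))
    (hXne : X.Nonempty) (hXclosed : IsClosed X) (hXconv : Convex ℝ X)
    (R : ℝ) (hR : 0 < R) (hXR : ∀ z ∈ X, ‖z‖ ≤ R)
    -- loss functions and their minimizers over X
    (f : ℕ → EuclideanSpace ℝ (Fin p) → ℝ)
    (hfdiff : ∀ t ∈ Finset.Icc 1 T, Differentiable ℝ (f t))
    (xs : ℕ → EuclideanSpace ℝ (Fin p))
    (hxs : ∀ t ∈ Finset.Icc 1 T, xs t ∈ X ∧ ∀ z ∈ X, f t (xs t) ≤ f t z)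
    -- quasar-convexity with respect to the minimizers
    (κ : ℝ) (hκ0 : 0 < κ) (hκ1 : κ ≤ 1)
    (hqc : ∀ t ∈ Finset.Icc 1 T, ∀ z ∈ X,
      f t z + (1/κ) * ⟪gradient (f t) z, xs t - z⟫ ≤ f t (xs t))
    -- delays: d is the maximum delay
    (dl : ℕ → ℕ) (hdl : ∀ t ∈ Finset.Icc 1 T, 1 ≤ dl t)
    (d : ℕ) (hdub : ∀ t ∈ Finset.Icc 1 T, dl t ≤ d)
    (hdmem : ∃ t ∈ Finset.Icc 1 T, dl t = d)
    -- noisy gradient feedback r_t = ∇f_t(x_t) + m_t with ‖m_t‖ ≤ δ_t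
    (mm : ℕ → EuclideanSpace ℝ (Fin p)) (δ : ℕ → ℝ)
    (hmm : ∀ t ∈ Finset.Icc 1 T, ‖mm t‖ ≤ δ t)
    -- iterates with constant step size η: projected update using received gradients
    (x : ℕ → EuclideanSpace ℝ (Fin p))
    (η : ℝ) (hη : 0 < η)
    (hx1 : x 1 ∈ X)
    (hupd : ∀ t : ℕ, 1 ≤ t →
      (((Finset.Icc 1 T).filter fun k => k + dl k - 1 = t).Nonempty →
        x (t+1) ∈ X ∧ ∀ z ∈ X,
          ‖x (t+1) - (x t - η • ∑ k ∈ (Finset.Icc 1 T).filter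
              (fun k => k + dl k - 1 = t), (gradient (f k) (x k) + mm k))‖ ≤
          ‖z - (x t - η • ∑ k ∈ (Finset.Icc 1 T).filter
              (fun k => k + dl k - 1 = t), (gradient (f k) (x k) + mm k))‖) ∧
      (¬ ((Finset.Icc 1 T).filter fun k => k + dl k - 1 = t).Nonempty →
        x (t+1) = x t))
    -- Lipschitz gradients: ‖∇f_t‖ ≤ L on X
    (L : ℝ) (hL : ∀ t ∈ Finset.Icc 1 T, ∀ z ∈ X, ‖gradient (f t) z‖ ≤ L) :
    -- dynamic regret bound
    ∑ t ∈ Finset.Icc 1 T, (f t (x t) - f t (xs t)) ≤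
      2 * R^2 / (η * κ)
      + ((3 * R + η * L * ((d : ℝ) - 1)) / (η * κ)) *
          (∑ t ∈ Finset.Icc 1 (T - 1), ‖xs (t+1) - xs t‖)
      + ((L^2 * (d : ℝ) + 4 * ((d : ℝ) - 1) * L^2) / (2 * κ)) * η * (T : ℝ)
      + (η * (d : ℝ) / (2 * κ)) * (∑ t ∈ Finset.Icc 1 T, (δ t)^2)
      + ((η * (d : ℝ) * L + 2 * R + 2 * η * ((d : ℝ) - 1) * L) / κ) *
          (∑ t ∈ Finset.Icc 1 T, δ t) :=
  dogd_dynamic_regret_lipschitz_general p T hT X hXconv R hR hXR f xs hxs κ hκ0 hqc dl hdl d hdub mm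
    δ hmm x η hη hx1 hupd L hL
end

section
/- Let f : ℝ^p → ℝ be differentiable with G-Lipschitz gradient and let h > 0. Then for every x ∈ ℝ^p, ‖Σ_{i=1}^p ((f(x + h e_i) − f(x))/h) e_i − ∇f(x)‖ ≤ √p · G · h / 2, where {e_i}_{i=1}^p is the canonical basis of ℝ^p. -/
/-!
Along the segment from `x` to `x + v`, the function
`φ t = f (x + t • v) - f x - t * ⟪∇f x, v⟫` vanishes at `0` and has derivative
`⟪∇f (x + t • v) - ∇f x, v⟫`, of size at most `G * t * ‖v‖²`; hence `|φ 1| ≤ G * ‖v‖² / 2`.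
Taking `v = h • eᵢ`, each coordinate of the forward-difference estimator is within `G * h / 2`
of `∂ᵢ f x`, and a vector of `p` coordinates each bounded by `c` has Euclidean norm at most `√p * c`.
-/

open scoped RealInnerProductSpace

section LipschitzGradient

variable {E : Type*} [NormedAddCommGroup E] [InnerProductSpace ℝ E] [CompleteSpace E]
  {f : E → ℝ} {G : ℝ}

theorem hasDerivAt_comp_add_smul_sub_inner_gradient (hf : Differentiable ℝ f) (x v : E) (t : ℝ) :
    HasDerivAt (fun s : ℝ => f (x + s • v) - f x - s * ⟪gradient f x, v⟫)
      ⟪gradient f (x + t • v) - gradient f x, v⟫ t := by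
  have hline : HasDerivAt (fun s : ℝ => x + s • v) v t := by
    simpa using ((hasDerivAt_id t).smul_const v).const_add x
  have hcomp : HasDerivAt (fun s : ℝ => f (x + s • v)) ⟪gradient f (x + t • v), v⟫ t :=
    (hf _).hasGradientAt.hasFDerivAt.comp_hasDerivAt t hline
  rw [inner_sub_left]
  exact (hcomp.sub_const (f x)).sub (hasDerivAt_mul_const _)

theorem abs_sub_sub_inner_gradient_le (hf : Differentiable ℝ f) {x : E}
    (hLip : ∀ y, ‖gradient f y - gradient f x‖ ≤ G * ‖y - x‖) (v : E) :
    |f (x + v) - f x - ⟪gradient f x, v⟫| ≤ G * ‖v‖ ^ 2 / 2 := by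
  have hderiv := hasDerivAt_comp_add_smul_sub_inner_gradient hf x v
  have hB : ∀ t : ℝ, HasDerivAt (fun s => G * ‖v‖ ^ 2 * s ^ 2 / 2) (G * ‖v‖ ^ 2 * t) t := by
    intro t
    exact (((hasDerivAt_pow 2 t).const_mul (G * ‖v‖ ^ 2)).div_const 2).congr_deriv (by
      norm_num; ring)
  have hbound : ∀ t ∈ Set.Ico (0 : ℝ) 1,
      ‖⟪gradient f (x + t • v) - gradient f x, v⟫‖ ≤ G * ‖v‖ ^ 2 * t := by
    rintro t ⟨ht, -⟩
    calc ‖⟪gradient f (x + t • v) - gradient f x, v⟫‖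
        ≤ ‖gradient f (x + t • v) - gradient f x‖ * ‖v‖ := norm_inner_le_norm _ _
      _ ≤ G * ‖x + t • v - x‖ * ‖v‖ := by gcongr; exact hLip _
      _ = G * ‖v‖ ^ 2 * t := by
        rw [add_sub_cancel_left, norm_smul, Real.norm_of_nonneg ht]; ring
  have := image_norm_le_of_norm_deriv_right_le_deriv_boundary
    (fun t _ => (hderiv t).continuousAt.continuousWithinAt)
    (fun t _ => (hderiv t).hasDerivWithinAt) (by simp) hB hbound (Set.right_mem_Icc.2 zero_le_one)
  simpa using this

end LipschitzGradient

theorem EuclideanSpace.norm_le_sqrt_card_mul {𝕜 ι : Type*} [RCLike 𝕜] [Fintype ι]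
    {v : EuclideanSpace 𝕜 ι} {c : ℝ} (hv : ∀ i, ‖v i‖ ≤ c) :
    ‖v‖ ≤ √(Fintype.card ι) * c := by
  rcases isEmpty_or_nonempty ι with _ | ⟨⟨i₀⟩⟩
  · simp [Subsingleton.elim v 0]
  have hc : 0 ≤ c := (norm_nonneg _).trans (hv i₀)
  calc ‖v‖ = √(∑ i, ‖v i‖ ^ 2) := EuclideanSpace.norm_eq v
    _ ≤ √(∑ _ : ι, c ^ 2) := by gcongr with i; exact hv i
    _ = √(Fintype.card ι) * c := by
      rw [Finset.sum_const, Finset.card_univ, nsmul_eq_mul, Real.sqrt_mul (Nat.cast_nonneg _),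
        Real.sqrt_sq hc]

section ForwardDifference

variable {ι : Type*} [Fintype ι] [DecidableEq ι]

noncomputable def forwardDifferenceGradient (f : EuclideanSpace ℝ ι → ℝ) (h : ℝ)
    (x : EuclideanSpace ℝ ι) : EuclideanSpace ℝ ι :=
  ∑ i, ((f (x + h • EuclideanSpace.single i (1 : ℝ)) - f x) / h) • EuclideanSpace.single i (1 : ℝ)

theorem forwardDifferenceGradient_apply (f : EuclideanSpace ℝ ι → ℝ) (h : ℝ)
    (x : EuclideanSpace ℝ ι) (i : ι) :
    forwardDifferenceGradient f h x i = (f (x + h • EuclideanSpace.single i (1 : ℝ)) - f x) / h := by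
  simp [forwardDifferenceGradient, Pi.single_apply]

theorem abs_forwardDifferenceGradient_sub_gradient_apply_le {f : EuclideanSpace ℝ ι → ℝ}
    (hf : Differentiable ℝ f) {G : ℝ} {x : EuclideanSpace ℝ ι}
    (hLip : ∀ y, ‖gradient f y - gradient f x‖ ≤ G * ‖y - x‖) {h : ℝ} (hh : 0 < h) (i : ι) :
    |(forwardDifferenceGradient f h x - gradient f x) i| ≤ G * h / 2 := by
  have htaylor := abs_sub_sub_inner_gradient_le hf hLip (h • EuclideanSpace.single i (1 : ℝ))
  rw [inner_smul_right, EuclideanSpace.inner_single_right, norm_smul,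
    PiLp.norm_single, Real.norm_of_nonneg hh.le, norm_one, mul_one, one_mul, conj_trivial]
    at htaylor
  have hdiff : (forwardDifferenceGradient f h x - gradient f x) i
      = (f (x + h • EuclideanSpace.single i (1 : ℝ)) - f x - h * gradient f x i) / h := by
    rw [PiLp.sub_apply, forwardDifferenceGradient_apply]
    field_simp
  rw [hdiff, abs_div, abs_of_pos hh, div_le_iff₀ hh]
  linarith

end ForwardDifference

theorem forward_difference_gradient_error_general
    (p : ℕ) (f : EuclideanSpace ℝ (Fin p) → ℝ)
    (hf : Differentiable ℝ f)
    (G : ℝ)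
    (hLip : ∀ x y : EuclideanSpace ℝ (Fin p),
      ‖gradient f x - gradient f y‖ ≤ G * ‖x - y‖)
    (h : ℝ) (hh : 0 < h) :
    ∀ x : EuclideanSpace ℝ (Fin p),
      ‖(∑ i : Fin p, ((f (x + h • EuclideanSpace.single i (1:ℝ)) - f x) / h) •
          EuclideanSpace.single i (1:ℝ)) - gradient f x‖ ≤
        Real.sqrt p * G * h / 2 := by
  intro x
  have hcomp := abs_forwardDifferenceGradient_sub_gradient_apply_le hf (fun y => hLip y x) hh
  calc ‖forwardDifferenceGradient f h x - gradient f x‖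
      ≤ √(Fintype.card (Fin p)) * (G * h / 2) :=
        EuclideanSpace.norm_le_sqrt_card_mul fun i => (Real.norm_eq_abs _).trans_le (hcomp i)
    _ = Real.sqrt p * G * h / 2 := by rw [Fintype.card_fin]; ring

/-- Forward finite-difference gradient estimate for a function with G-Lipschitz
gradient: the (p+1)-point estimator is within √p·G·h/2 of the true gradient. -/
theorem forward_difference_gradient_error
    (p : ℕ) (f : EuclideanSpace ℝ (Fin p) → ℝ)
    (hf : Differentiable ℝ f)
    (G : ℝ) (hG : 0 < G)
    (hLip : ∀ x y : EuclideanSpace ℝ (Fin p),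
      ‖gradient f x - gradient f y‖ ≤ G * ‖x - y‖)
    (h : ℝ) (hh : 0 < h) :
    ∀ x : EuclideanSpace ℝ (Fin p),
      ‖(∑ i : Fin p, ((f (x + h • EuclideanSpace.single i (1:ℝ)) - f x) / h) •
          EuclideanSpace.single i (1:ℝ)) - gradient f x‖ ≤
        Real.sqrt p * G * h / 2 :=
  forward_difference_gradient_error_general p f hf G hLip h hh
end

section
/- Let R > 0, p, m ≥ 1, let a₁, …, a_m ∈ ℝ^p, let x* ∈ ℝ^p with ‖x*‖ ≤ R, let σ(α) = e^α/(1 + e^α) be the logistic function, set b_i = σ(⟨a_i, x*⟩) for i ∈ [m], and define f(x) = (1/(2m)) Σ_{i=1}^m (σ(⟨a_i, x⟩) − b_i)². Then f is Γ-weakly smooth with respect to x* with Γ = (max_{i∈[m]} ‖a_i‖²)/8; that is, for every x ∈ ℝ^p, ‖∇f(x)‖² ≤ ((max_{i∈[m]} ‖a_i‖²)/8) · (f(x) − f(x*)), where f(x*) = 0. -/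
/-!
The loss is `f = (1/(2m)) ∑ (φ⟪aᵢ, ·⟫ - bᵢ)²` with `φ` the logistic function, which vanishes at `x*`
because the labels are realizable. Its gradient is `(1/m) ∑ φ'ᵢ (φᵢ - bᵢ) aᵢ`; bounding `|φ'| ≤ 1/4`,
`‖aᵢ‖² ≤ M := maxⱼ ‖aⱼ‖²` and applying Cauchy–Schwarz to the sum gives `‖∇f‖² ≤ (M/(16m)) ∑ (φᵢ - bᵢ)² = (M/8) f`.
-/

open RealInnerProductSpace Finset

namespace Real

lemma sigmoid_eq_exp_div (x : ℝ) : sigmoid x = exp x / (1 + exp x) := by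
  rw [sigmoid_def, exp_neg]
  field_simp
  ring

lemma abs_sigmoid_mul_one_sub_sigmoid_le (x : ℝ) : |sigmoid x * (1 - sigmoid x)| ≤ 1 / 4 := by
  rw [abs_of_nonneg (mul_nonneg (sigmoid_nonneg x) (sub_nonneg.2 (sigmoid_le_one x)))]
  nlinarith [sq_nonneg (sigmoid x - 1 / 2)]

end Real

section

variable {ι E : Type*} [NormedAddCommGroup E] [InnerProductSpace ℝ E]

lemma norm_sum_smul_sq_le_card_mul (s : Finset ι) (w : ι → ℝ) (v : ι → E) :
    ‖∑ i ∈ s, w i • v i‖ ^ 2 ≤ #s * ∑ i ∈ s, w i ^ 2 * ‖v i‖ ^ 2 := by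
  have hnorm : ‖∑ i ∈ s, w i • v i‖ ≤ ∑ i ∈ s, |w i| * ‖v i‖ := by
    simpa only [norm_smul, Real.norm_eq_abs] using norm_sum_le s (fun i => w i • v i)
  calc ‖∑ i ∈ s, w i • v i‖ ^ 2 ≤ (∑ i ∈ s, |w i| * ‖v i‖) ^ 2 := by gcongr
    _ ≤ #s * ∑ i ∈ s, (|w i| * ‖v i‖) ^ 2 := sq_sum_le_card_mul_sum_sq
    _ = #s * ∑ i ∈ s, w i ^ 2 * ‖v i‖ ^ 2 := by simp only [mul_pow, sq_abs]

variable [Fintype ι]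

noncomputable def glmLoss (φ : ℝ → ℝ) (a : ι → E) (b : ι → ℝ) (z : E) : ℝ :=
  1 / (2 * (Fintype.card ι : ℝ)) * ∑ i, (φ ⟪a i, z⟫ - b i) ^ 2

lemma glmLoss_eq_zero_of_realizable {φ : ℝ → ℝ} {a : ι → E} {b : ι → ℝ} {xstar : E}
    (hb : ∀ i, b i = φ ⟪a i, xstar⟫) : glmLoss φ a b xstar = 0 := by
  simp [glmLoss, hb]

lemma hasGradientAt_glmLoss [CompleteSpace E] {φ φ' : ℝ → ℝ} (hφ : ∀ t, HasDerivAt φ (φ' t) t)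
    (a : ι → E) (b : ι → ℝ) (x : E) :
    HasGradientAt (glmLoss φ a b)
      (∑ i, ((Fintype.card ι : ℝ)⁻¹ * (φ' ⟪a i, x⟫ * (φ ⟪a i, x⟫ - b i))) • a i) x := by
  have hterm : ∀ i, HasFDerivAt (fun z => (φ ⟪a i, z⟫ - b i) ^ 2)
      ((2 * (φ ⟪a i, x⟫ - b i) * φ' ⟪a i, x⟫) • innerSL ℝ (a i)) x := fun i => by
    have hψ : HasDerivAt (fun t => (φ t - b i) ^ 2)
        (2 * (φ ⟪a i, x⟫ - b i) * φ' ⟪a i, x⟫) ⟪a i, x⟫ := by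
      simpa using ((hφ ⟪a i, x⟫).sub_const (b i)).fun_pow 2
    exact hψ.comp_hasFDerivAt x (innerSL ℝ (a i)).hasFDerivAt
  have hloss := (HasFDerivAt.fun_sum (u := univ) fun i _ => hterm i).const_mul
    (1 / (2 * (Fintype.card ι : ℝ)))
  rw [hasGradientAt_iff_hasFDerivAt]
  refine hloss.congr_fderiv ?_
  ext y
  simp only [InnerProductSpace.toDual_apply_apply, sum_inner, real_inner_smul_left,
    FunLike.coe_smul, FunLike.coe_sum, Pi.smul_apply, Finset.sum_apply,
    innerSL_apply_apply, smul_eq_mul, mul_sum]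
  refine sum_congr rfl fun i _ => ?_
  ring

lemma norm_gradient_glmLoss_sq_le [CompleteSpace E] {φ φ' : ℝ → ℝ}
    (hφ : ∀ t, HasDerivAt φ (φ' t) t) {L M : ℝ} (hφ' : ∀ t, |φ' t| ≤ L) {a : ι → E}
    (ha : ∀ i, ‖a i‖ ^ 2 ≤ M) (b : ι → ℝ) (x : E) :
    ‖gradient (glmLoss φ a b) x‖ ^ 2 ≤ 2 * L ^ 2 * M * glmLoss φ a b x := by
  set n : ℝ := (Fintype.card ι : ℝ)
  set d : ι → ℝ := fun i => φ ⟪a i, x⟫ - b i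
  have hterm : ∀ i, (n⁻¹ * (φ' ⟪a i, x⟫ * d i)) ^ 2 * ‖a i‖ ^ 2 ≤ n⁻¹ ^ 2 * L ^ 2 * M * d i ^ 2 :=
    fun i => by
      have hL : φ' ⟪a i, x⟫ ^ 2 ≤ L ^ 2 := sq_le_sq' (abs_le.1 (hφ' _)).1 (abs_le.1 (hφ' _)).2
      calc (n⁻¹ * (φ' ⟪a i, x⟫ * d i)) ^ 2 * ‖a i‖ ^ 2
          = n⁻¹ ^ 2 * d i ^ 2 * (φ' ⟪a i, x⟫ ^ 2 * ‖a i‖ ^ 2) := by ring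
        _ ≤ n⁻¹ ^ 2 * d i ^ 2 * (L ^ 2 * M) := by gcongr; exact ha i
        _ = n⁻¹ ^ 2 * L ^ 2 * M * d i ^ 2 := by ring
  rw [(hasGradientAt_glmLoss hφ a b x).gradient]
  calc _ ≤ n * ∑ i, (n⁻¹ * (φ' ⟪a i, x⟫ * d i)) ^ 2 * ‖a i‖ ^ 2 :=
        norm_sum_smul_sq_le_card_mul _ _ _
    _ ≤ n * ∑ i, n⁻¹ ^ 2 * L ^ 2 * M * d i ^ 2 :=
        mul_le_mul_of_nonneg_left (sum_le_sum fun i _ => hterm i) (Nat.cast_nonneg _)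
    _ = 2 * L ^ 2 * M * glmLoss φ a b x := by
        simp only [glmLoss, ← mul_sum, d, n]
        rcases eq_or_ne (Fintype.card ι : ℝ) 0 with hn | hn
        · simp [hn]
        · field_simp

end

theorem glm_logistic_weakly_smooth_general
    (p m : ℕ) [NeZero m]
    (a : Fin m → EuclideanSpace ℝ (Fin p))
    (xstar : EuclideanSpace ℝ (Fin p))
    (σ : ℝ → ℝ) (hσ : ∀ α : ℝ, σ α = Real.exp α / (1 + Real.exp α))
    (b : Fin m → ℝ) (hb : ∀ i, b i = σ ⟪a i, xstar⟫)
    (f : EuclideanSpace ℝ (Fin p) → ℝ)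
    (hf : ∀ z, f z = (1 / (2 * (m : ℝ))) * ∑ i : Fin m, (σ ⟪a i, z⟫ - b i)^2) :
    f xstar = 0 ∧
    ∀ x : EuclideanSpace ℝ (Fin p),
      ‖gradient f x‖^2 ≤
        ((Finset.univ.sup' Finset.univ_nonempty fun i => ‖a i‖^2) / 8) *
          (f x - f xstar) := by
  obtain rfl : σ = Real.sigmoid := funext fun α => by rw [hσ, Real.sigmoid_eq_exp_div]
  obtain rfl : f = glmLoss Real.sigmoid a b := funext fun z => by simp [hf, glmLoss]
  have hf_xstar := glmLoss_eq_zero_of_realizable hb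
  refine ⟨hf_xstar, fun x => ?_⟩
  have ha : ∀ i, ‖a i‖ ^ 2 ≤ univ.sup' univ_nonempty fun j => ‖a j‖ ^ 2 :=
    fun i => le_sup' (fun j => ‖a j‖ ^ 2) (mem_univ i)
  have hbound := norm_gradient_glmLoss_sq_le Real.hasDerivAt_sigmoid
    Real.abs_sigmoid_mul_one_sub_sigmoid_le ha b x
  rw [hf_xstar, sub_zero]
  linarith

/-- The GLM loss with logistic link σ and realizable labels b_i = σ(⟨a_i, x*⟩) is
Γ-weakly smooth with respect to x*, with Γ = (max_i ‖a_i‖²)/8, and f(x*) = 0. -/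
theorem glm_logistic_weakly_smooth
    (R : ℝ) (hR : 0 < R)
    (p m : ℕ) (hp : 1 ≤ p) [NeZero m]
    (a : Fin m → EuclideanSpace ℝ (Fin p))
    (xstar : EuclideanSpace ℝ (Fin p)) (hxstar : ‖xstar‖ ≤ R)
    (σ : ℝ → ℝ) (hσ : ∀ α : ℝ, σ α = Real.exp α / (1 + Real.exp α))
    (b : Fin m → ℝ) (hb : ∀ i, b i = σ ⟪a i, xstar⟫)
    (f : EuclideanSpace ℝ (Fin p) → ℝ)
    (hf : ∀ z, f z = (1 / (2 * (m : ℝ))) * ∑ i : Fin m, (σ ⟪a i, z⟫ - b i)^2) :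
    f xstar = 0 ∧
    ∀ x : EuclideanSpace ℝ (Fin p),
      ‖gradient f x‖^2 ≤
        ((Finset.univ.sup' Finset.univ_nonempty fun i => ‖a i‖^2) / 8) *
          (f x - f xstar) :=
  glm_logistic_weakly_smooth_general p m a xstar σ hσ b hb f hf
end

section
/- Let X ⊆ ℝ^p be open and convex, let f : X → ℝ be differentiable, let x* ∈ X be a global minimizer of f on X, and let κ ∈ (0,1]. Then f is κ-quasar-convex with respect to x*, i.e. f(x*) ≥ f(x) + (1/κ)⟨∇f(x), x* − x⟩ for all x ∈ X, if and only if f(λ x* + (1−λ) x) ≤ κλ f(x*) + (1 − κλ) f(x) for all x ∈ X and all λ ∈ [0,1]. -/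
open RealInnerProductSpace

/-- Characterization of quasar-convexity (Lemma 11 of Hinder et al.):
for a differentiable function on an open convex set with minimizer x*,
the gradient inequality holds iff the segment inequality holds. -/
theorem quasar_convex_iff_segment
    (p : ℕ) (X : Set (EuclideanSpace ℝ (Fin p)))
    (hXopen : IsOpen X) (hXconv : Convex ℝ X)
    (f : EuclideanSpace ℝ (Fin p) → ℝ) (hf : DifferentiableOn ℝ f X)
    (xstar : EuclideanSpace ℝ (Fin p)) (hxstar : xstar ∈ X)
    (hmin : ∀ x ∈ X, f xstar ≤ f x)
    (κ : ℝ) (hκ0 : 0 < κ) (hκ1 : κ ≤ 1) :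
    (∀ x ∈ X, f x + (1/κ) * ⟪gradient f x, xstar - x⟫ ≤ f xstar) ↔
    (∀ x ∈ X, ∀ l : ℝ, l ∈ Set.Icc (0:ℝ) 1 →
      f (l • xstar + (1 - l) • x) ≤ κ * l * f xstar + (1 - κ * l) * f x) := by
  have hfat : ∀ y ∈ X, DifferentiableAt ℝ f y := fun y hy =>
    (hf y hy).differentiableAt (hXopen.mem_nhds hy)
  have hinner : ∀ y ∈ X, ∀ v, ⟪gradient f y, v⟫ = fderiv ℝ f y v := by
    intro y hy v
    rw [gradient, InnerProductSpace.toDual_symm_apply]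
  constructor
  · -- gradient inequality ⇒ segment inequality
    intro hgrad x hx
    set γ : ℝ → EuclideanSpace ℝ (Fin p) := fun t => t • (xstar - x) + x with hγdef
    have hγmem : ∀ t ∈ Set.Icc (0:ℝ) 1, γ t ∈ X := by
      intro t ht
      have := hXconv hxstar hx (a := t) (b := 1 - t) ht.1 (by linarith [ht.2]) (by ring)
      have heq : γ t = t • xstar + (1 - t) • x := by
        simp only [hγdef, smul_sub, sub_smul, one_smul]; abel
      rw [heq]; exact this
    have hγ0 : γ 0 = x := by simp [hγdef]
    have hγ1 : γ 1 = xstar := by simp [hγdef]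
    have key : ∀ t ∈ Set.Icc (0:ℝ) 1,
        f (γ t) ≤ κ * t * f xstar + (1 - κ * t) * f x := by
      by_contra hcon
      push_neg at hcon
      obtain ⟨t₀, ht₀, ht₀'⟩ := hcon
      set ψ : ℝ → ℝ := fun t => κ * t * f xstar + (1 - κ * t) * f x - f (γ t) with hψdef
      have hψcont : ContinuousOn ψ (Set.Icc 0 1) := by
        apply ContinuousOn.sub
        · fun_prop
        · apply ContinuousOn.comp (continuousOn_of_forall_continuousAt
            (fun y hy => (hfat y hy).continuousAt)) _ hγmem
          fun_prop
      obtain ⟨t₁, ht₁, hmin₁⟩ := isCompact_Icc.exists_isMinOn (Set.nonempty_Icc.2 zero_le_one) hψcont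
      have hψt₁ : ψ t₁ < 0 := lt_of_le_of_lt (hmin₁ ht₀) (by simp [hψdef]; linarith)
      have hψ0 : ψ 0 = 0 := by simp [hψdef, hγ0]
      have hψ1 : 0 ≤ ψ 1 := by
        have := hmin x hx
        simp only [hψdef, hγ1]
        nlinarith
      have ht₁0 : t₁ ≠ 0 := fun h => by rw [h, hψ0] at hψt₁; linarith
      have ht₁1 : t₁ ≠ 1 := fun h => by rw [h] at hψt₁; linarith
      have ht₁mem : t₁ ∈ Set.Ioo (0:ℝ) 1 :=
        ⟨lt_of_le_of_ne ht₁.1 (Ne.symm ht₁0), lt_of_le_of_ne ht₁.2 ht₁1⟩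
      have hγt₁X : γ t₁ ∈ X := hγmem t₁ ht₁
      -- derivative of ψ at t₁
      have hγd : HasDerivAt γ (xstar - x) t₁ :=
        ((hasDerivAt_id t₁).smul_const (xstar - x)).add_const x |>.congr_deriv (one_smul ℝ _)
      have hfd : HasDerivAt (fun t => f (γ t)) (fderiv ℝ f (γ t₁) (xstar - x)) t₁ :=
        (hfat _ hγt₁X).hasFDerivAt.comp_hasDerivAt t₁ hγd
      have haff : HasDerivAt (fun t : ℝ => κ * t * f xstar + (1 - κ * t) * f x)
          (κ * f xstar - κ * f x) t₁ := by
        have h1 : HasDerivAt (fun t : ℝ => (κ * f xstar - κ * f x) * t + f x)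
            (κ * f xstar - κ * f x) t₁ := by
          simpa using ((hasDerivAt_id t₁).const_mul (κ * f xstar - κ * f x)).add_const (f x)
        exact h1.congr_of_eventuallyEq (Filter.Eventually.of_forall (fun t => by ring))
      have hψd : HasDerivAt ψ (κ * f xstar - κ * f x - fderiv ℝ f (γ t₁) (xstar - x)) t₁ :=
        haff.sub hfd
      have hloc : IsLocalMin ψ t₁ :=
        hmin₁.isLocalMin (Icc_mem_nhds ht₁mem.1 ht₁mem.2)
      have hderiv0 := hloc.hasDerivAt_eq_zero hψd
      -- gradient inequality at γ t₁
      have hg := hgrad (γ t₁) hγt₁X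
      have hsub : xstar - γ t₁ = (1 - t₁) • (xstar - x) := by
        simp only [hγdef, smul_sub, sub_smul, one_smul]
        abel
      rw [hsub, real_inner_smul_right, hinner _ hγt₁X] at hg
      -- hg : f (γ t₁) + (1/κ) * ((1 - t₁) * fderiv ℝ f (γ t₁) (xstar - x)) ≤ f xstar
      have hG : fderiv ℝ f (γ t₁) (xstar - x) = κ * f xstar - κ * f x := by linarith
      rw [hG] at hg
      have hminx := hmin x hx
      have hψexp : f (γ t₁) > κ * t₁ * f xstar + (1 - κ * t₁) * f x := by
        simp only [hψdef] at hψt₁; linarith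
      have hκt : (1/κ) * ((1 - t₁) * (κ * f xstar - κ * f x)) = (1 - t₁) * (f xstar - f x) := by
        field_simp
      rw [hκt] at hg
      nlinarith [mul_nonneg (mul_nonneg ht₁mem.1.le (sub_nonneg.2 hκ1)) (sub_nonneg.2 hminx)]
    intro l hl
    have heq : l • xstar + (1 - l) • x = γ l := by
      simp only [hγdef, smul_sub, sub_smul, one_smul]; abel
    rw [heq]
    exact key l hl
  · -- segment inequality ⇒ gradient inequality
    intro hseg x hx
    set γ : ℝ → EuclideanSpace ℝ (Fin p) := fun t => t • (xstar - x) + x with hγdef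
    have hγ0 : γ 0 = x := by simp [hγdef]
    have hγd : HasDerivAt γ (xstar - x) 0 :=
      ((hasDerivAt_id 0).smul_const (xstar - x)).add_const x |>.congr_deriv (one_smul ℝ _)
    have hfd : HasDerivAt (fun t => f (γ t)) (fderiv ℝ f x (xstar - x)) 0 := by
      have hm : γ 0 ∈ X := by rw [hγ0]; exact hx
      have h0 := (hfat _ hm).hasFDerivAt.comp_hasDerivAt 0 hγd
      rw [hγ0] at h0
      exact h0
    have hslope : Filter.Tendsto (fun t => (f (γ t) - f x) / t) (nhdsWithin 0 (Set.Ioi 0))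
        (nhds (fderiv ℝ f x (xstar - x))) := by
      have h := hasDerivAt_iff_tendsto_slope.mp hfd
      have h2 := h.mono_left (nhdsWithin_mono 0 (fun t (ht : t ∈ Set.Ioi 0) =>
        (ne_of_gt ht : t ≠ 0)))
      refine h2.congr' ?_
      filter_upwards [self_mem_nhdsWithin] with t ht
      simp [slope_def_field, hγ0, div_eq_inv_mul]
    have hbound : fderiv ℝ f x (xstar - x) ≤ κ * (f xstar - f x) := by
      refine le_of_tendsto hslope ?_
      filter_upwards [Ioo_mem_nhdsGT_of_mem (Set.mem_Ico.2 ⟨le_refl 0, one_pos⟩)] with t ht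
      have hseg' := hseg x hx t ⟨ht.1.le, ht.2.le⟩
      have heq : t • xstar + (1 - t) • x = γ t := by
        simp only [hγdef, smul_sub, sub_smul, one_smul]; abel
      rw [heq] at hseg'
      rw [div_le_iff₀ ht.1]
      nlinarith
    rw [hinner _ hx]
    have : (1/κ) * fderiv ℝ f x (xstar - x) ≤ f xstar - f x := by
      rw [div_mul_eq_mul_div, one_mul, div_le_iff₀ hκ0]
      nlinarith
    linarith
end
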